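/- arXiv:2207.02528 — 8 statements merged into one kernel-verified Lean document; each statement's English description precedes it below -/
import Mathlib

section
/- Let G = (V, E) be a finite hypergraph and G₁ = (V₁, E₁) be obtained from G by adding a k-dominating set S. If λ is an eigenvalue of L_G with eigenvector x ∈ ℝ^V satisfying Σ_{u∈V} x(u) = 0, then λ + 1 is an eigenvalue of L_{G₁}, with eigenvector the extension x̄ of x to V₁ defined by x̄(v) = x(v) for v ∈ V and x̄(v) = 0 for v ∈ S. -/
open Finset

/-- The hypergraph Laplacian as an operator on real-valued vertex functions:
`(L_G f)(v) = ∑_{e ∋ v} (1/(|e|-1)) ∑_{u ∈ e} (f v - f u)`. -/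
noncomputable def lapOp {V : Type} [Fintype V] [DecidableEq V] (E : Finset (Finset V)) (f : V → ℝ) : V → ℝ :=
  fun v => ∑ e ∈ E.filter (fun e => v ∈ e), (1 / ((e.card : ℝ) - 1)) * ∑ u ∈ e, (f v - f u)

/-- The matrix of the hypergraph Laplacian. -/
noncomputable def lapMatrix {V : Type} [Fintype V] [DecidableEq V] (E : Finset (Finset V)) : Matrix V V ℝ :=
  Matrix.of fun v w => ∑ e ∈ E.filter (fun e => v ∈ e),
    (1 / ((e.card : ℝ) - 1)) * ((if w = v then (e.card : ℝ) else 0) - (if w ∈ e then 1 else 0))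

/-- Edge set obtained from `E` by adding a `k`-dominating set `S = Fin k` of fresh vertices:
the new edges are `S ∪ {u}` for every old vertex `u`. -/
def domEdges {V : Type} [Fintype V] [DecidableEq V] (E : Finset (Finset V)) (k : ℕ) :
    Finset (Finset (V ⊕ Fin k)) :=
  E.image (Finset.image Sum.inl) ∪
    (Finset.univ : Finset V).image
      (fun u => insert (Sum.inl u) ((Finset.univ : Finset (Fin k)).image Sum.inr))

/-
The new edges `S ∪ {u}` have `k + 1` vertices, so each carries weight `1/k`. At an old
vertex `v` the old edges give `(L_G x)(v) = λ x(v)`, and the single new edge through `v` gives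
`(1/k) · k · x(v) = x(v)`, since `x̄` vanishes on `S`. At a vertex of `S` only the new edges
contribute, giving `-(1/k) ∑_u x(u) = 0`.
-/

variable {V W : Type} [DecidableEq V] [DecidableEq W]

section Laplacian

variable [Fintype V] [Fintype W]

theorem lapOp_union {E F : Finset (Finset V)} (h : Disjoint E F) (f : V → ℝ) :
    lapOp (E ∪ F) f = lapOp E f + lapOp F f := by
  funext v
  simp only [lapOp, Pi.add_apply, filter_union, sum_union (disjoint_filter_filter h)]

theorem lapOp_apply_eq_zero_of_forall_notMem {E : Finset (Finset V)} {v : V}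
    (h : ∀ e ∈ E, v ∉ e) (f : V → ℝ) : lapOp E f v = 0 := by
  rw [lapOp, filter_false_of_mem h, sum_empty]

theorem lapOp_image_image_apply {φ : V → W} (hφ : Function.Injective φ)
    (E : Finset (Finset V)) (f : W → ℝ) (v : V) :
    lapOp (E.image (image φ)) f (φ v) = lapOp E (f ∘ φ) v := by
  rw [lapOp, lapOp, filter_image, sum_image fun _ _ _ _ h => image_injective hφ h]
  refine sum_congr ?_ fun e _ => ?_
  · simp only [hφ.mem_finset_image]
  · rw [card_image_of_injective _ hφ, sum_image hφ.injOn]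
    rfl

end Laplacian

section DominatingSet

variable (k : ℕ)

/-- The new edge `S ∪ {u}`. -/
def domStar (u : V) : Finset (V ⊕ Fin k) :=
  insert (Sum.inl u) ((univ : Finset (Fin k)).image Sum.inr)

theorem inl_notMem_image_inr (u : V) :
    (Sum.inl u : V ⊕ Fin k) ∉ (univ : Finset (Fin k)).image Sum.inr := by
  simp

theorem card_domStar (u : V) : (domStar k u).card = k + 1 := by
  rw [domStar, card_insert_of_notMem (inl_notMem_image_inr k u),
    card_image_of_injective _ Sum.inr_injective, card_univ, Fintype.card_fin]

@[simp]
theorem inl_mem_domStar {a u : V} : (Sum.inl a : V ⊕ Fin k) ∈ domStar k u ↔ a = u := by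
  simp [domStar]

@[simp]
theorem inr_mem_domStar (j : Fin k) (u : V) : (Sum.inr j : V ⊕ Fin k) ∈ domStar k u := by
  simp [domStar]

theorem domStar_injective : Function.Injective (domStar (V := V) k) := fun _ _ h =>
  (inl_mem_domStar k).1 (h ▸ mem_insert_self _ _)

theorem sum_domStar_sub (x : V → ℝ) (w : V ⊕ Fin k) (u : V) :
    ∑ w' ∈ domStar k u, (Sum.elim x (fun _ => 0) w - Sum.elim x (fun _ => 0) w') =
      k * Sum.elim x (fun _ => 0) w + (Sum.elim x (fun _ => 0) w - x u) := by
  rw [domStar, sum_insert (inl_notMem_image_inr k u), sum_image Sum.inr_injective.injOn]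
  simp [add_comm]

variable [Fintype V]

theorem domEdges_eq (E : Finset (Finset V)) :
    domEdges E k = E.image (image Sum.inl) ∪ univ.image (domStar k) := rfl

theorem disjoint_image_inl_image_domStar {k : ℕ} (hk : 0 < k) (E : Finset (Finset V)) :
    Disjoint (E.image (image Sum.inl)) (univ.image (domStar k)) := by
  simp only [disjoint_left, mem_image, mem_univ, true_and, not_exists]
  rintro _ ⟨e, -, rfl⟩ u hu
  have hS := inr_mem_domStar k ⟨0, hk⟩ u
  rw [hu] at hS
  simp at hS

theorem lapOp_domStars_inl {k : ℕ} (hk : 0 < k) (x : V → ℝ) (a : V) :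
    lapOp (univ.image (domStar k)) (Sum.elim x fun _ => 0) (Sum.inl a) = x a := by
  have hfilter : (univ.image (domStar k)).filter (Sum.inl a ∈ ·) = {domStar k a} := by
    ext e
    simp only [mem_filter, mem_image, mem_univ, true_and, mem_singleton]
    constructor
    · rintro ⟨⟨u, rfl⟩, h⟩
      rw [(inl_mem_domStar k).1 h]
    · rintro rfl
      exact ⟨⟨a, rfl⟩, (inl_mem_domStar k).2 rfl⟩
  have hk' : (k : ℝ) ≠ 0 := by positivity
  rw [lapOp, hfilter, sum_singleton, sum_domStar_sub, card_domStar]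
  push_cast
  simp only [Sum.elim_inl, sub_self, add_zero, add_sub_cancel_right]
  field_simp

theorem lapOp_domStars_inr (x : V → ℝ) (j : Fin k) :
    lapOp (univ.image (domStar k)) (Sum.elim x fun _ => 0) (Sum.inr j) = -(∑ u, x u) / k := by
  have hfilter : (univ.image (domStar (V := V) k)).filter (Sum.inr j ∈ ·) =
      univ.image (domStar k) :=
    filter_true_of_mem fun e he => by
      obtain ⟨u, -, rfl⟩ := mem_image.1 he
      exact inr_mem_domStar k j u
  rw [lapOp, hfilter, sum_image (domStar_injective (V := V) k).injOn, ← sum_neg_distrib, sum_div]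
  refine sum_congr rfl fun u _ => ?_
  rw [sum_domStar_sub, card_domStar]
  push_cast
  simp only [Sum.elim_inr, mul_zero, zero_sub, zero_add, add_sub_cancel_right]
  ring

end DominatingSet

theorem stmt_1_general {V : Type} [Fintype V] [DecidableEq V]
    (E : Finset (Finset V)) (k : ℕ) (hk : 0 < k)
    (lam : ℝ) (x : V → ℝ) (hx : x ≠ 0)
    (heig : lapOp E x = lam • x) (hsum : ∑ u : V, x u = 0) :
    Sum.elim x (fun _ : Fin k => (0 : ℝ)) ≠ 0 ∧
      lapOp (domEdges E k) (Sum.elim x fun _ => 0) =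
        (lam + 1) • Sum.elim x fun _ : Fin k => (0 : ℝ) := by
  refine ⟨fun h => hx (by simpa using congrArg (· ∘ Sum.inl) h), ?_⟩
  rw [domEdges_eq, lapOp_union (disjoint_image_inl_image_domStar hk E)]
  funext w
  rcases w with a | j
  · have heig_a := congrFun heig a
    simp only [Pi.add_apply, Pi.smul_apply, lapOp_image_image_apply Sum.inl_injective,
      Sum.elim_comp_inl, heig_a, lapOp_domStars_inl hk, Sum.elim_inl, smul_eq_mul]
    ring
  · have hnew : ∀ e ∈ E.image (image Sum.inl), (Sum.inr j : V ⊕ Fin k) ∉ e := by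
      simp
    simp [lapOp_apply_eq_zero_of_forall_notMem hnew, lapOp_domStars_inr, hsum]

/-- If `x` is an eigenvector of `L_G` for eigenvalue `lam` with `∑ x = 0`, then its extension
by zero to the dominating vertices is an eigenvector of `L_{G₁}` for `lam + 1`. -/
theorem stmt_1 {V : Type} [Fintype V] [DecidableEq V]
    (E : Finset (Finset V)) (hE : ∀ e ∈ E, 2 ≤ e.card) (k : ℕ) (hk : 0 < k)
    (lam : ℝ) (x : V → ℝ) (hx : x ≠ 0)
    (heig : lapOp E x = lam • x) (hsum : ∑ u : V, x u = 0) :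
    Sum.elim x (fun _ : Fin k => (0 : ℝ)) ≠ 0 ∧
      lapOp (domEdges E k) (Sum.elim x fun _ => 0) =
        (lam + 1) • Sum.elim x fun _ : Fin k => (0 : ℝ) :=
  stmt_1_general E k hk lam x hx heig hsum
end

section
/- Let G = (V, E) be a finite hypergraph with Laplacian eigenvalues λ₁ = 0, λ₂, …, λ_{|V|} (with multiplicity), and let G₁ be obtained from G by adding a k-dominating set. Then the multiset of eigenvalues of L_{G₁} is exactly {0} ∪ {λ_i + 1 : i = 2, …, |V|} ∪ {(|V| + k)/k} ∪ {(k+1)|V|/k with multiplicity k − 1}. -/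
open Finset

/-!
In the block decomposition along `V ⊕ Fin k`, the Laplacian `L₁` of the extended hypergraph is
`[[L + 1, -(1/k) J], [-(1/k) J, (n + n/k) 1 - (n/k) J]]`, where `J` is the all-ones matrix and
`n = |V|`. Since `L J = 0`, the Schur complement of `(x - 1) 1 - L` in `x 1 - L₁` is again of the
form `α 1 + β J`, whose determinant is explicit. This gives the polynomial identity
`(X - 1) χ_{L₁}(X) = χ_L(X - 1) · X (X - (n + k)/k) (X - (k + 1) n/k)^(k - 1)`,
from which the roots of `χ_{L₁}` are read off.
-/

open Matrix Polynomial

lemma roots_comp_X_sub_C {R : Type*} [CommRing R] [IsDomain R] (p : R[X]) (a : R) :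
    (p.comp (X - C a)).roots = p.roots.map (· + a) := by
  simpa [sub_eq_add_neg] using roots_comp_C_mul_X_add_C p 1 (-a) isUnit_one

section AllOnes

variable {K : Type*} [Field K] {l m n : Type*}

variable (K) in
def allOnes (m n : Type*) : Matrix m n K := of fun _ _ => 1

@[simp]
lemma allOnes_apply (i : m) (j : n) : allOnes K m n i j = 1 := rfl

lemma allOnes_mul_allOnes [Fintype m] :
    allOnes K l m * allOnes K m n = (Fintype.card m : K) • allOnes K l n := by
  ext
  simp [Matrix.mul_apply]

lemma det_smul_one_add_smul_allOnes [Fintype n] [DecidableEq n] [Nonempty n] {α : K} (hα : α ≠ 0)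
    (β : K) :
    (α • (1 : Matrix n n K) + β • allOnes K n n).det =
      α ^ (Fintype.card n - 1) * (α + Fintype.card n * β) := by
  have hrank_one : α • (1 : Matrix n n K) + β • allOnes K n n =
      α • ((1 : Matrix n n K) + replicateCol Unit (fun _ : n => β / α) *
        replicateRow Unit (fun _ : n => (1 : K))) := by
    ext i j
    simp [Matrix.one_apply, Matrix.mul_apply, replicateCol, replicateRow]
    split_ifs <;> field_simp
    ring
  obtain ⟨c, hc⟩ := Nat.exists_eq_succ_of_ne_zero (Fintype.card_ne_zero (α := n))
  rw [hrank_one, det_smul, det_one_add_replicateCol_mul_replicateRow]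
  simp only [dotProduct, one_mul, sum_const, card_univ, nsmul_eq_mul, hc, Nat.succ_sub_one,
    pow_succ]
  field_simp

lemma det_fromBlocks_smul_allOnes [Fintype m] [DecidableEq m] [Fintype n] [DecidableEq n]
    [Nonempty n] {A : Matrix m m K} (hA : IsUnit A.det) {a : K} (ha : a ≠ 0)
    (hAJ : A * allOnes K m n = a • allOnes K m n) (b c : K) {α : K} (hα : α ≠ 0) (β : K) :
    (fromBlocks A (b • allOnes K m n) (c • allOnes K n m) (α • 1 + β • allOnes K n n)).det =
      A.det * (α ^ (Fintype.card n - 1) *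
        (α + Fintype.card n * (β - b * c * Fintype.card m / a))) := by
  let := invertibleOfIsUnitDet A hA
  have hinv : ⅟A * allOnes K m n = a⁻¹ • allOnes K m n := by
    rw [← inv_smul_smul₀ ha (⅟A * allOnes K m n), ← Matrix.mul_smul, ← hAJ, ← Matrix.mul_assoc,
      invOf_mul_self, Matrix.one_mul]
  have hschur : α • 1 + β • allOnes K n n - c • allOnes K n m * ⅟A * (b • allOnes K m n) =
      α • (1 : Matrix n n K) + (β - b * c * Fintype.card m / a) • allOnes K n n := by
    simp only [Matrix.mul_assoc, Matrix.mul_smul, hinv, Matrix.smul_mul, allOnes_mul_allOnes,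
      smul_smul]
    module
  rw [det_fromBlocks₁₁, hschur, det_smul_one_add_smul_allOnes hα]

end AllOnes

section Laplacian

variable {V S : Type} [DecidableEq V] [Fintype S] [DecidableEq S]

variable (S) in
def starEdge (u : V) : Finset (V ⊕ S) := insert (Sum.inl u) (univ.image Sum.inr)

@[simp]
lemma inl_mem_starEdge {u v : V} : Sum.inl v ∈ starEdge S u ↔ v = u := by
  simp [starEdge]

@[simp]
lemma inr_mem_starEdge (u : V) (s : S) : Sum.inr s ∈ starEdge S u := by
  simp [starEdge]

@[simp]
lemma card_starEdge (u : V) : #(starEdge S u) = Fintype.card S + 1 := by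
  rw [starEdge, card_insert_of_notMem (by simp), card_image_of_injective _ Sum.inr_injective,
    card_univ]

lemma starEdge_injective : Function.Injective (starEdge S : V → Finset (V ⊕ S)) :=
  fun _ _ h => inl_mem_starEdge.mp (h ▸ inl_mem_starEdge.mpr rfl)

variable [Fintype V]

lemma lapMatrix_mul_allOnes (E : Finset (Finset V)) (n : Type*) :
    lapMatrix E * allOnes ℝ V n = 0 := by
  ext v j
  simp only [lapMatrix, Matrix.mul_apply, of_apply, allOnes_apply, mul_one, Matrix.zero_apply]
  rw [sum_comm]
  refine sum_eq_zero fun e _ => ?_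
  rw [← mul_sum, sum_sub_distrib, sum_ite_eq', sum_boole, filter_mem_eq_inter, univ_inter]
  simp

lemma lapMatrix_union {E₁ E₂ : Finset (Finset V)} (h : Disjoint E₁ E₂) :
    lapMatrix (E₁ ∪ E₂) = lapMatrix E₁ + lapMatrix E₂ := by
  ext v w
  simp only [lapMatrix, of_apply, Matrix.add_apply, filter_union,
    sum_union (disjoint_filter_filter h)]

lemma lapMatrix_image_image_inl (E : Finset (Finset V)) :
    lapMatrix (E.image (image Sum.inl) : Finset (Finset (V ⊕ S))) =
      fromBlocks (lapMatrix E) 0 0 0 := by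
  ext (v | s) (w | t) <;>
    simp [lapMatrix, filter_image, sum_image (image_injective Sum.inl_injective).injOn,
      card_image_of_injective _ Sum.inl_injective]

lemma lapMatrix_image_starEdge [Nonempty S] :
    lapMatrix (univ.image (starEdge S : V → Finset (V ⊕ S))) =
      fromBlocks 1 (-(1 / Fintype.card S : ℝ) • allOnes ℝ V S)
        (-(1 / Fintype.card S : ℝ) • allOnes ℝ S V)
        ((Fintype.card V + Fintype.card V / Fintype.card S : ℝ) • 1 -
          (Fintype.card V / Fintype.card S : ℝ) • allOnes ℝ S S) := by
  have hS : (Fintype.card S : ℝ) ≠ 0 := Nat.cast_ne_zero.mpr Fintype.card_ne_zero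
  ext (v | s) (w | t) <;>
    simp [lapMatrix, filter_image, sum_image starEdge_injective.injOn, Matrix.one_apply,
      filter_eq, eq_comm]
  all_goals split_ifs <;> field_simp <;> ring

lemma lapMatrix_domEdges (E : Finset (Finset V)) {k : ℕ} (hk : 0 < k) :
    lapMatrix (domEdges E k) =
      fromBlocks (lapMatrix E + 1) (-(1 / k : ℝ) • allOnes ℝ V (Fin k))
        (-(1 / k : ℝ) • allOnes ℝ (Fin k) V)
        ((Fintype.card V + Fintype.card V / k : ℝ) • 1 -
          (Fintype.card V / k : ℝ) • allOnes ℝ (Fin k) (Fin k)) := by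
  have : NeZero k := ⟨hk.ne'⟩
  have hdisj : Disjoint (E.image (image Sum.inl)) (univ.image (starEdge (Fin k) : V → _)) := by
    simp only [disjoint_left, mem_image]
    rintro _ ⟨e, -, rfl⟩ ⟨u, -, hu⟩
    have h0 := inr_mem_starEdge u (0 : Fin k)
    rw [hu] at h0
    simp at h0
  rw [show domEdges E k = E.image (image Sum.inl) ∪ univ.image (starEdge (Fin k)) from rfl,
    lapMatrix_union hdisj, lapMatrix_image_image_inl, lapMatrix_image_starEdge, fromBlocks_add]
  simp

lemma scalar_sub_lapMatrix_domEdges (E : Finset (Finset V)) {k : ℕ} (hk : 0 < k) (x : ℝ) :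
    scalar _ x - lapMatrix (domEdges E k) =
      fromBlocks (scalar V (x - 1) - lapMatrix E) ((1 / k : ℝ) • allOnes ℝ V (Fin k))
        ((1 / k : ℝ) • allOnes ℝ (Fin k) V)
        ((x - (k + 1) * Fintype.card V / k) • 1 +
          (Fintype.card V / k : ℝ) • allOnes ℝ (Fin k) (Fin k)) := by
  have hk' : (k : ℝ) ≠ 0 := by positivity
  rw [lapMatrix_domEdges E hk]
  ext (v | s) (w | t) <;> simp [Matrix.one_apply, diagonal_apply]
  all_goals split_ifs <;> field_simp <;> ring

theorem X_sub_one_mul_charpoly_lapMatrix_domEdges (E : Finset (Finset V)) {k : ℕ} (hk : 0 < k) :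
    (X - C 1 : ℝ[X]) * (lapMatrix (domEdges E k)).charpoly =
      (lapMatrix E).charpoly.comp (X - C 1) *
        (X * (X - C (((Fintype.card V : ℝ) + k) / k)) *
          (X - C (((k : ℝ) + 1) * Fintype.card V / k)) ^ (k - 1)) := by
  have : Nonempty (Fin k) := ⟨⟨0, hk⟩⟩
  have hk' : (k : ℝ) ≠ 0 := by positivity
  set n : ℝ := (Fintype.card V : ℝ)
  set r : ℝ := (k + 1) * n / k
  set exceptional : ℝ[X] := (X - C 1) * (X - C r) * (lapMatrix E).charpoly.comp (X - C 1)
  have hexceptional : exceptional ≠ 0 := (((monic_X_sub_C 1).mul (monic_X_sub_C r)).mul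
    ((charpoly_monic _).comp_X_sub_C 1)).ne_zero
  refine eq_of_infinite_eval_eq _ _
    ((finite_setOfPred_isRoot hexceptional).infinite_compl.mono fun x hx => ?_)
  simp only [Set.mem_compl_iff, Set.mem_ofPred_eq, IsRoot, exceptional, eval_mul, eval_sub,
    eval_X, eval_C, eval_comp, mul_ne_zero_iff, sub_ne_zero, eval_charpoly] at hx
  obtain ⟨⟨hx1, hxr⟩, hdet⟩ := hx
  have hrow : (scalar V (x - 1) - lapMatrix E) * allOnes ℝ V (Fin k) =
      (x - 1) • allOnes ℝ V (Fin k) := by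
    rw [Matrix.sub_mul, lapMatrix_mul_allOnes, sub_zero, scalar_apply, ← smul_eq_diagonal_mul]
  simp only [Set.mem_ofPred_eq, eval_mul, eval_sub, eval_X, eval_C, eval_comp, eval_pow,
    eval_charpoly, scalar_sub_lapMatrix_domEdges E hk]
  rw [det_fromBlocks_smul_allOnes (isUnit_iff_ne_zero.mpr hdet) (sub_ne_zero.mpr hx1) hrow _ _
    (sub_ne_zero.mpr hxr)]
  simp only [r, n, Fintype.card_fin]
  field_simp
  ring

end Laplacian

theorem stmt_4_general {V : Type} [Fintype V] [DecidableEq V]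
    (E : Finset (Finset V)) (k : ℕ) (hk : 0 < k)
    (μ : Multiset ℝ) (h : (lapMatrix E).charpoly.roots = (0 : ℝ) ::ₘ μ) :
    (lapMatrix (domEdges E k)).charpoly.roots =
      ((0 : ℝ) ::ₘ μ.map (· + 1)) + {((Fintype.card V : ℝ) + k) / k} +
        Multiset.replicate (k - 1) (((k : ℝ) + 1) * (Fintype.card V) / k) := by
  set r₂ : ℝ := ((Fintype.card V : ℝ) + k) / k
  set r₃ : ℝ := ((k : ℝ) + 1) * Fintype.card V / k
  have hroots := congrArg roots (X_sub_one_mul_charpoly_lapMatrix_domEdges E hk)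
  have hmonic₁ := (monic_X_sub_C (1 : ℝ)).mul (charpoly_monic (lapMatrix (domEdges E k)))
  have hmonic₂ := monic_X.mul (monic_X_sub_C r₂)
  have hmonic₃ := hmonic₂.mul ((monic_X_sub_C r₃).pow (k - 1))
  have hmonic₄ := ((charpoly_monic (lapMatrix E)).comp_X_sub_C 1).mul hmonic₃
  rw [roots_mul hmonic₁.ne_zero, roots_mul hmonic₄.ne_zero, roots_mul hmonic₃.ne_zero,
    roots_mul hmonic₂.ne_zero, roots_comp_X_sub_C, h, roots_X, roots_X_sub_C, roots_X_sub_C,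
    roots_pow, roots_X_sub_C] at hroots
  refine add_left_cancel (a := {1}) (hroots.trans ?_)
  rw [Multiset.map_cons, zero_add, Multiset.nsmul_singleton]
  simp only [← Multiset.singleton_add]
  abel

/-- The full spectrum (with multiplicity) of the Laplacian after adding a `k`-dominating
set, in terms of the spectrum of the original hypergraph. -/
theorem stmt_4 {V : Type} [Fintype V] [DecidableEq V] [Nonempty V]
    (E : Finset (Finset V)) (hE : ∀ e ∈ E, 2 ≤ e.card) (k : ℕ) (hk : 0 < k)
    (μ : Multiset ℝ) (h : (lapMatrix E).charpoly.roots = (0 : ℝ) ::ₘ μ) :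
    (lapMatrix (domEdges E k)).charpoly.roots =
      ((0 : ℝ) ::ₘ μ.map (· + 1)) + {((Fintype.card V : ℝ) + k) / k} +
        Multiset.replicate (k - 1) (((k : ℝ) + 1) * (Fintype.card V) / k) :=
  stmt_4_general E k hk μ h
end

section
/- In a k-threshold hypergraph with string 0^{m₁} k 0^{m₂} k ⋯ 0^{m_d} k, any vertex u added in the i-th domination has degree d(u) = Σ_{j=1}^{i} m_j + k(i − 1) + (d − i). -/
open Finset

/-- Vertex type of the threshold hypergraph with string `0^{m 0} (k 0) 0^{m 1} (k 1) ⋯`: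
`inl ⟨i, a⟩` is the `a`-th isolated vertex added before the `i`-th domination, and
`inr ⟨i, b⟩` is the `b`-th vertex of the `i`-th dominating set. -/
abbrev TV (d : ℕ) (m k : Fin d → ℕ) : Type :=
  (Σ i : Fin d, Fin (m i)) ⊕ (Σ i : Fin d, Fin (k i))

/-- Vertices present just before the `i`-th domination is applied. -/
def before (d : ℕ) (m k : Fin d → ℕ) (i : Fin d) : Finset (TV d m k) :=
  (((Finset.univ.filter (fun j : Fin d => j ≤ i)).sigma
      fun j => (Finset.univ : Finset (Fin (m j)))).image Sum.inl) ∪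
  (((Finset.univ.filter (fun j : Fin d => j < i)).sigma
      fun j => (Finset.univ : Finset (Fin (k j)))).image Sum.inr)

/-- The `i`-th dominating set. -/
def domSet (d : ℕ) (m k : Fin d → ℕ) (i : Fin d) : Finset (TV d m k) :=
  (Finset.univ : Finset (Fin (k i))).image fun b => Sum.inr ⟨i, b⟩

/-- The edge set of the threshold hypergraph `0^{m 0} (k 0) 0^{m 1} (k 1) ⋯ 0^{m (d-1)} (k (d-1))`:
the `i`-th domination adds the edges `S_i ∪ {u}` for all previously present vertices `u`. -/
def thrEdges (d : ℕ) (m k : Fin d → ℕ) : Finset (Finset (TV d m k)) :=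
  Finset.univ.biUnion fun i : Fin d =>
    (before d m k i).image fun u => insert u (domSet d m k i)

section aux
variable {d : ℕ} {m : Fin d → ℕ} {k : ℕ}

lemma aux_mem_domSet {i : Fin d} {v : TV d m fun _ => k} :
    v ∈ domSet d m (fun _ => k) i ↔ ∃ b : Fin k, v = Sum.inr ⟨i, b⟩ := by
  simp [domSet, eq_comm]

lemma aux_inr_mem_before {i j : Fin d} {b : Fin k} :
    (Sum.inr ⟨j, b⟩ : TV d m fun _ => k) ∈ before d m (fun _ => k) i ↔ j < i := by
  constructor
  · intro h
    simp only [before, mem_union, mem_image] at h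
    rcases h with ⟨x, _, hx⟩ | ⟨x, hx, hx2⟩
    · exact absurd hx (by simp)
    · obtain ⟨rfl⟩ : x = ⟨j, b⟩ := by
        exact Sum.inr.inj hx2
      simpa using (mem_sigma.mp hx).1
  · intro h
    simp only [before, mem_union, mem_image]
    exact Or.inr ⟨⟨j, b⟩, mem_sigma.mpr ⟨by simpa using h, mem_univ _⟩, rfl⟩

lemma aux_before_not_domSet {i : Fin d} {u : TV d m fun _ => k}
    (hu : u ∈ before d m (fun _ => k) i) : u ∉ domSet d m (fun _ => k) i := by
  intro hmem
  rw [aux_mem_domSet] at hmem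
  obtain ⟨b, rfl⟩ := hmem
  have := aux_inr_mem_before.mp hu
  exact lt_irrefl i this

lemma aux_injOn (i : Fin d) :
    Set.InjOn (fun u => insert u (domSet d m (fun _ => k) i))
      (before d m (fun _ => k) i : Set (TV d m fun _ => k)) := by
  intro u hu u' hu' h
  simp only at h
  have h1 : u ∈ insert u' (domSet d m (fun _ => k) i) := h ▸ mem_insert_self u _
  rcases mem_insert.mp h1 with h2 | h2
  · exact h2
  · exact absurd h2 (aux_before_not_domSet hu)

lemma aux_card_before (i : Fin d) :
    (before d m (fun _ => k) i).card =
      (∑ j ∈ univ.filter (fun j : Fin d => j ≤ i), m j) + k * i.val := by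
  rw [before, card_union_of_disjoint]
  · congr 1
    · rw [card_image_of_injective _ Sum.inl_injective, card_sigma]
      simp
    · rw [card_image_of_injective _ Sum.inr_injective, card_sigma]
      simp only [card_univ, Fintype.card_fin]
      rw [sum_const, smul_eq_mul, mul_comm]
      congr 1
      rw [show (univ.filter (fun j : Fin d => j < i)) = Finset.Iio i by ext; simp]
      simp [Fin.card_Iio]
  · simp only [disjoint_left, mem_image]
    rintro _ ⟨x, _, rfl⟩ ⟨y, _, h⟩
    exact absurd h (by simp)

end aux

/-- In a `k`-threshold hypergraph, a vertex added in the `i`-th domination (`0`-indexed `i`)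
has degree `∑_{j=1}^{i} m_j + k(i-1) + (d-i)` (`1`-indexed), i.e.
`∑_{j ≤ i} m j + k * i + (d - (i+1))` here. -/
theorem stmt_8 (d : ℕ) (hd : 0 < d) (m : Fin d → ℕ) (k : ℕ)
    (hm : 1 ≤ m ⟨0, hd⟩) (hk : 1 ≤ k) (i : Fin d) (b : Fin k) :
    ((thrEdges d m fun _ => k).filter
        (fun e => (Sum.inr ⟨i, b⟩ : TV d m fun _ => k) ∈ e)).card =
      (∑ j ∈ Finset.univ.filter (fun j : Fin d => j ≤ i), m j) + k * i.val +
        (d - (i.val + 1)) := by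
  classical
  set v : TV d m fun _ => k := Sum.inr ⟨i, b⟩ with hv
  -- membership of v in an edge from block i'
  have hmem : ∀ (i' : Fin d) (u : TV d m fun _ => k),
      v ∈ insert u (domSet d m (fun _ => k) i') ↔ v = u ∨ i' = i := by
    intro i' u
    rw [mem_insert, aux_mem_domSet]
    constructor
    · rintro (h | ⟨b', h⟩)
      · exact Or.inl h
      · refine Or.inr ?_
        rw [hv] at h
        obtain ⟨h1, -⟩ := Sigma.mk.inj_iff.mp (Sum.inr.inj h)
        exact h1.symm
    · rintro (h | rfl)
      · exact Or.inl h
      · exact Or.inr ⟨b, rfl⟩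
  rw [thrEdges, filter_biUnion]
  have hdisj : ∀ i₁ ∈ (univ : Finset (Fin d)), ∀ i₂ ∈ (univ : Finset (Fin d)), i₁ ≠ i₂ →
      Disjoint (((before d m (fun _ => k) i₁).image
          (fun u => insert u (domSet d m (fun _ => k) i₁))).filter (fun e => v ∈ e))
        (((before d m (fun _ => k) i₂).image
          (fun u => insert u (domSet d m (fun _ => k) i₂))).filter (fun e => v ∈ e)) := by
    -- key: if e comes from blocks i₁ and i₂ then i₁ = i₂
    have key : ∀ (i₁ i₂ : Fin d), i₁ < i₂ →
        ∀ e, e ∈ (before d m (fun _ => k) i₁).image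
            (fun u => insert u (domSet d m (fun _ => k) i₁)) →
          e ∉ (before d m (fun _ => k) i₂).image
            (fun u => insert u (domSet d m (fun _ => k) i₂)) := by
      intro i₁ i₂ hlt e he1 he2
      simp only [mem_image] at he1 he2
      obtain ⟨u1, hu1, rfl⟩ := he1
      obtain ⟨u2, hu2, heq⟩ := he2
      -- inr ⟨i₂, 0⟩ is in the second edge but not the first
      set w : TV d m fun _ => k := Sum.inr ⟨i₂, ⟨0, hk⟩⟩ with hw
      have hwin : w ∈ insert u1 (domSet d m (fun _ => k) i₁) := by
        rw [← heq]
        exact mem_insert_of_mem (aux_mem_domSet.mpr ⟨⟨0, hk⟩, rfl⟩)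
      rcases mem_insert.mp hwin with h | h
      · subst h
        have := aux_inr_mem_before.mp hu1
        exact absurd hlt (not_lt.mpr this.le)
      · rw [aux_mem_domSet] at h
        obtain ⟨b', hb'⟩ := h
        rw [hw] at hb'
        obtain ⟨h1, -⟩ := Sigma.mk.inj_iff.mp (Sum.inr.inj hb')
        exact absurd h1 (ne_of_gt hlt)
    intro i₁ _ i₂ _ hne
    rw [disjoint_left]
    intro e he1 he2
    rw [mem_filter] at he1 he2
    rcases lt_or_gt_of_ne hne with h | h
    · exact key i₁ i₂ h e he1.1 he2.1
    · exact key i₂ i₁ h e he2.1 he1.1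
  rw [card_biUnion hdisj]
  -- compute each term
  have hterm : ∀ i' : Fin d,
      (((before d m (fun _ => k) i').image
          (fun u => insert u (domSet d m (fun _ => k) i'))).filter (fun e => v ∈ e)).card =
        if i' = i then (∑ j ∈ univ.filter (fun j : Fin d => j ≤ i), m j) + k * i.val
        else if i < i' then 1 else 0 := by
    intro i'
    rw [filter_image, card_image_of_injOn
      ((aux_injOn i').mono (by exact_mod_cast filter_subset _ _))]
    by_cases hii : i' = i
    · subst hii
      rw [if_pos rfl]
      rw [filter_true_of_mem (fun u _ => (hmem i' u).mpr (Or.inr rfl))]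
      exact aux_card_before i'
    · rw [if_neg hii]
      have : (before d m (fun _ => k) i').filter
          (fun u => v ∈ insert u (domSet d m (fun _ => k) i')) =
          (before d m (fun _ => k) i').filter (fun u => u = v) := by
        apply filter_congr
        intro u hu
        rw [hmem i' u]
        simp [hii, eq_comm]
      rw [this]
      by_cases hlt : i < i'
      · rw [if_pos hlt]
        rw [show (before d m (fun _ => k) i').filter (fun u => u = v) = {v} by
          ext u
          simp only [mem_filter, mem_singleton]
          constructor
          · exact fun h => h.2
          · rintro rfl
            exact ⟨aux_inr_mem_before.mpr hlt, rfl⟩]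
        simp
      · rw [if_neg hlt]
        rw [show (before d m (fun _ => k) i').filter (fun u => u = v) = ∅ by
          ext u
          simp only [mem_filter, notMem_empty, iff_false, not_and]
          rintro hu rfl
          exact hlt (aux_inr_mem_before.mp hu)]
        simp
  rw [Finset.sum_congr rfl (fun i' _ => hterm i')]
  rw [← Finset.sum_filter_add_sum_filter_not univ (fun x : Fin d => x = i)]
  rw [show univ.filter (fun x : Fin d => x = i) = {i} from by ext; simp]
  rw [sum_singleton, if_pos rfl]
  congr 1
  rw [Finset.sum_congr rfl (fun x hx =>
    if_neg (by simpa using (mem_filter.mp hx).2))]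
  rw [Finset.sum_ite, Finset.sum_const, Finset.sum_const, smul_eq_mul, mul_one,
    smul_eq_mul, mul_zero, add_zero]
  rw [show (univ.filter (fun x : Fin d => ¬ x = i)).filter (fun x => i < x) =
      Finset.Ioi i from by
    ext x
    simp only [mem_filter, mem_univ, true_and, Finset.mem_Ioi]
    exact ⟨fun h => h.2, fun h => ⟨h.ne', h⟩⟩]
  rw [Fin.card_Ioi]
  omega
end

section
/- Every threshold hypergraph is Laplacian r-integral for some r ∈ ℚ: there exists a rational r such that every eigenvalue of L_G is an integer multiple of r. -/
open Finset

/-!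
Rank the blocks of the construction string `0^{m 0} (k 0) 0^{m 1} (k 1) ⋯`: the `i`-th block of
isolated vertices has rank `2i` and the `i`-th dominating set `S_i` has rank `2i + 1`. The
Laplacian is the sum over `i` of the contributions of the edges `S_i ∪ {u}`, and the `i`-th
contribution has a closed form: it fixes zero-sum functions supported on ranks `≤ 2i`, kills
functions constant on ranks `≤ 2i + 1`, and scales both the zero-sum functions on `S_i` and
`k_i • 1_{rank ≤ 2i} - #{rank ≤ 2i} • 1_{S_i}` by a natural number divided by `k_i`.
Consequently every zero-sum function on a single block, and every vector
`#L • 1_{rank ≤ ℓ} - #{rank ≤ ℓ} • 1_L` with `L` the block of rank `ℓ + 1`, is an eigenvector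
with eigenvalue in `(∏ i, k i)⁻¹ ℤ`. Together with the constants these span all functions, and
eigenvectors for distinct eigenvalues are independent, so no other eigenvalue can occur.
-/

theorem Module.End.mem_of_hasEigenvalue_of_iSup_eigenspace_eq_top {R M : Type*} [CommRing R]
    [IsDomain R] [AddCommGroup M] [Module R M] [IsTorsionFree R M] {f : Module.End R M}
    {S : Set R} (hS : ⨆ μ ∈ S, f.eigenspace μ = ⊤) {μ : R} (hμ : f.HasEigenvalue μ) :
    μ ∈ S := by
  by_contra h
  have := (Module.End.eigenspaces_iSupIndep f).disjoint_biSup h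
  rw [hS, disjoint_top] at this
  exact hμ this

section Filtration

variable {V : Type*}

noncomputable def balancedIndicator (s t : Finset V) : V → ℝ :=
  (#t : ℝ) • Set.indicator (↑s) 1 - (#s : ℝ) • Set.indicator (↑t) 1

lemma sum_balancedIndicator [Fintype V] (s t : Finset V) :
    ∑ v, balancedIndicator s t v = 0 := by
  simp only [balancedIndicator, Pi.sub_apply, Pi.smul_apply, smul_eq_mul, sum_sub_distrib,
    ← mul_sum, sum_indicator_subset _ (subset_univ _), Pi.one_apply, sum_const, nsmul_one]
  ring

lemma balancedIndicator_apply_of_mem_left {s t : Finset V} (hst : Disjoint s t) {v : V}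
    (hv : v ∈ s) : balancedIndicator s t v = #t := by
  simp [balancedIndicator, hv, disjoint_left.mp hst hv]

lemma balancedIndicator_apply_of_mem_right {s t : Finset V} (hst : Disjoint s t) {v : V}
    (hv : v ∈ t) : balancedIndicator s t v = -#s := by
  simp [balancedIndicator, hv, disjoint_right.mp hst hv]

lemma balancedIndicator_apply_of_notMem {s t : Finset V} {v : V} (hs : v ∉ s) (ht : v ∉ t) :
    balancedIndicator s t v = 0 := by
  simp [balancedIndicator, hs, ht]

variable {W : Submodule ℝ (V → ℝ)}

lemma indicator_mem_of_balancedIndicator_mem [DecidableEq V] {s t : Finset V}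
    (hst : Disjoint s t) (hunion : Set.indicator ↑(s ∪ t) 1 ∈ W)
    (hbal : balancedIndicator s t ∈ W) : Set.indicator ↑s (1 : V → ℝ) ∈ W := by
  rcases s.eq_empty_or_nonempty with rfl | hne
  · rw [coe_empty, Set.indicator_empty]
    exact W.zero_mem
  have hcard : (#s : ℝ) + #t ≠ 0 := by positivity
  have hcomb : Set.indicator ↑s (1 : V → ℝ) =
      ((#s : ℝ) + #t)⁻¹ • ((#s : ℝ) • Set.indicator ↑(s ∪ t) 1 + balancedIndicator s t) := by
    ext v
    by_cases hs : v ∈ s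
    · have ht : v ∉ t := disjoint_left.mp hst hs
      simp [balancedIndicator, hs, ht]
      field_simp
    · by_cases ht : v ∈ t <;> simp [balancedIndicator, hs, ht]
  rw [hcomb]
  exact W.smul_mem _ (W.add_mem (W.smul_mem _ hunion) hbal)

lemma mem_of_indicator_mem [Fintype V] {s : Finset V}
    (hs : Set.indicator ↑s (1 : V → ℝ) ∈ W)
    (hzero : ∀ g : V → ℝ, (∀ v ∉ s, g v = 0) → ∑ v, g v = 0 → g ∈ W)
    {g : V → ℝ} (hg : ∀ v ∉ s, g v = 0) : g ∈ W := by
  set c := (∑ v, g v) / #s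
  have hsum : ∑ v, g v = c * #s := by
    rcases s.eq_empty_or_nonempty with rfl | hne
    · simp_all
    · rw [div_mul_cancel₀ _ (by exact_mod_cast hne.card_pos.ne')]
  have hrest : g - c • Set.indicator ↑s 1 ∈ W := by
    refine hzero _ (fun v hv => by simp [hg v hv, hv]) ?_
    simp only [Pi.sub_apply, Pi.smul_apply, smul_eq_mul, sum_sub_distrib, ← mul_sum,
      sum_indicator_subset _ (subset_univ _), Pi.one_apply, sum_const, nsmul_one, hsum, sub_self]
  simpa using W.add_mem hrest (W.smul_mem c hs)

variable [Fintype V] [DecidableEq V] (rk : V → ℕ)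

lemma indicator_rank_le_mem (hone : (1 : V → ℝ) ∈ W)
    (hbal : ∀ ℓ, balancedIndicator {v | rk v ≤ ℓ} {v | rk v = ℓ + 1} ∈ W) (ℓ : ℕ) :
    Set.indicator ↑({v | rk v ≤ ℓ} : Finset V) (1 : V → ℝ) ∈ W := by
  obtain ⟨n, hn⟩ : ∃ n, univ.sup rk ≤ ℓ + n := ⟨univ.sup rk, le_add_self⟩
  induction n generalizing ℓ with
  | zero =>
    have : ({v | rk v ≤ ℓ} : Finset V) = univ :=
      filter_true_of_mem fun v _ => (le_sup (mem_univ v)).trans hn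
    simpa [this] using hone
  | succ n ih =>
    refine indicator_mem_of_balancedIndicator_mem (t := {v | rk v = ℓ + 1}) ?_ ?_ (hbal ℓ)
    · exact disjoint_filter.mpr fun v _ h => by omega
    · convert ih (ℓ + 1) (by omega) using 3
      ext v
      simp only [mem_union, mem_filter, mem_univ, true_and]
      omega

lemma indicator_rank_eq_mem (hone : (1 : V → ℝ) ∈ W)
    (hbal : ∀ ℓ, balancedIndicator {v | rk v ≤ ℓ} {v | rk v = ℓ + 1} ∈ W) (ℓ : ℕ) :
    Set.indicator ↑({v | rk v = ℓ} : Finset V) (1 : V → ℝ) ∈ W := by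
  rcases ℓ with _ | ℓ
  · simpa using indicator_rank_le_mem rk hone hbal 0
  have hsplit : Set.indicator ↑({v | rk v = ℓ + 1} : Finset V) (1 : V → ℝ) =
      Set.indicator ↑({v | rk v ≤ ℓ + 1} : Finset V) 1 -
        Set.indicator ↑({v | rk v ≤ ℓ} : Finset V) 1 := by
    ext v
    simp only [Set.indicator_apply, coe_filter, mem_univ, true_and, Set.mem_ofPred_eq,
      Pi.sub_apply, Pi.one_apply]
    split_ifs <;> first | omega | norm_num
  rw [hsplit]
  exact W.sub_mem (indicator_rank_le_mem rk hone hbal _) (indicator_rank_le_mem rk hone hbal _)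

theorem Submodule.eq_top_of_balancedIndicator_mem (hone : (1 : V → ℝ) ∈ W)
    (hbal : ∀ ℓ, balancedIndicator {v | rk v ≤ ℓ} {v | rk v = ℓ + 1} ∈ W)
    (hlevel : ∀ ℓ (g : V → ℝ), (∀ v, rk v ≠ ℓ → g v = 0) → ∑ v, g v = 0 → g ∈ W) :
    W = ⊤ := by
  rw [eq_top_iff']
  intro g
  rw [← univ_sum_single g]
  refine W.sum_mem fun v _ => mem_of_indicator_mem (indicator_rank_eq_mem rk hone hbal (rk v)) ?_ ?_
  · intro g hg hsum
    exact hlevel _ g (fun w hw => hg w (by simpa using hw)) hsum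
  · intro w hw
    simp only [mem_filter, mem_univ, true_and] at hw
    exact Pi.single_eq_of_ne (fun h => hw (by rw [h])) _

end Filtration

noncomputable def lapLinearMap {V : Type} [Fintype V] [DecidableEq V] (E : Finset (Finset V)) :
    Module.End ℝ (V → ℝ) where
  toFun := lapOp E
  map_add' f g := by
    ext v
    simp only [lapOp, Pi.add_apply, add_sub_add_comm, sum_add_distrib, mul_add]
  map_smul' c f := by
    ext v
    simp only [lapOp, Pi.smul_apply, smul_eq_mul, ← mul_sub, ← mul_sum, RingHom.id_apply]
    rw [mul_sum]
    exact sum_congr rfl fun e _ => mul_left_comm _ _ _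

lemma natCast_div_mem_zmultiples {q N : ℕ} (hq : q ∣ N) (hN : N ≠ 0) (a : ℕ) :
    (a : ℝ) / q ∈ AddSubgroup.zmultiples ((N : ℝ)⁻¹) := by
  obtain ⟨c, rfl⟩ := hq
  have hq : (q : ℝ) ≠ 0 := by exact_mod_cast left_ne_zero_of_mul hN
  have hc : (c : ℝ) ≠ 0 := by exact_mod_cast right_ne_zero_of_mul hN
  refine ⟨a * c, ?_⟩
  simp only [zsmul_eq_mul]
  push_cast
  field_simp

namespace ThresholdHypergraph

variable {d : ℕ} {m k : Fin d → ℕ}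

def rank : TV d m k → ℕ
  | .inl ⟨i, _⟩ => 2 * i
  | .inr ⟨i, _⟩ => 2 * i + 1

lemma mem_before_iff {i : Fin d} {v : TV d m k} : v ∈ before d m k i ↔ rank v ≤ 2 * (i : ℕ) := by
  rcases v with ⟨j, a⟩ | ⟨j, b⟩ <;>
    simp only [before, rank, mem_union, Sum.inl_injective.mem_finset_image,
      Sum.inr_injective.mem_finset_image, mem_image, mem_sigma, mem_filter, mem_univ, true_and,
      and_true, reduceCtorEq, and_false, exists_false, or_false, false_or, Fin.le_def,
      Fin.lt_def] <;> omega

lemma mem_domSet_iff {i : Fin d} {v : TV d m k} :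
    v ∈ domSet d m k i ↔ rank v = 2 * (i : ℕ) + 1 := by
  rcases v with ⟨j, a⟩ | ⟨j, b⟩
  · simp only [domSet, rank, mem_image, reduceCtorEq, and_false, exists_false, false_iff]; omega
  · simp only [domSet, rank, mem_image, mem_univ, true_and, Sum.inr.injEq, Sigma.mk.inj_iff]
    constructor
    · rintro ⟨_, rfl, -⟩; rfl
    · intro h
      obtain rfl : j = i := Fin.ext (by omega)
      exact ⟨b, rfl, HEq.rfl⟩

lemma card_domSet (i : Fin d) : #(domSet d m k i) = k i := by
  rw [domSet, card_image_of_injective _ fun b b' h => by simpa using Sum.inr_injective h, card_univ,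
    Fintype.card_fin]

lemma disjoint_before_domSet (i : Fin d) : Disjoint (before d m k i) (domSet d m k i) :=
  disjoint_left.mpr fun v hB hS => by
    have := mem_before_iff.mp hB; have := mem_domSet_iff.mp hS; omega

lemma rank_le_of_mem_insert_domSet {i : Fin d} {u w : TV d m k} (hu : u ∈ before d m k i)
    (hw : w ∈ insert u (domSet d m k i)) : rank w ≤ 2 * (i : ℕ) + 1 := by
  rcases mem_insert.mp hw with rfl | hw
  · exact (mem_before_iff.mp hu).trans (Nat.le_succ _)
  · exact (mem_domSet_iff.mp hw).le

lemma le_of_insert_domSet_eq (hk : ∀ i, k i ≠ 0) {i j : Fin d} {u u' : TV d m k}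
    (hu : u ∈ before d m k i)
    (h : insert u (domSet d m k i) = insert u' (domSet d m k j)) : j ≤ i := by
  have hw : (Sum.inr ⟨j, ⟨0, Nat.pos_of_ne_zero (hk j)⟩⟩ : TV d m k) ∈ insert u (domSet d m k i) :=
    h ▸ mem_insert_of_mem (mem_domSet_iff.mpr rfl)
  have := rank_le_of_mem_insert_domSet hu hw
  simp only [rank] at this
  exact Fin.le_def.mpr (by omega)

lemma pairwiseDisjoint_stageEdges (hk : ∀ i, k i ≠ 0) :
    (↑(univ : Finset (Fin d)) : Set (Fin d)).PairwiseDisjoint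
      fun i => (before d m k i).image fun u => insert u (domSet d m k i) := by
  intro i _ j _ hij
  refine disjoint_left.mpr fun e hei hej => hij ?_
  obtain ⟨u, hu, rfl⟩ := mem_image.mp hei
  obtain ⟨u', hu', h⟩ := mem_image.mp hej
  exact le_antisymm (le_of_insert_domSet_eq hk hu' h) (le_of_insert_domSet_eq hk hu h.symm)

lemma insert_domSet_injOn (i : Fin d) :
    Set.InjOn (fun u => insert u (domSet d m k i)) (before d m k i) := by
  intro u hu u' hu' (h : insert u (domSet d m k i) = insert u' (domSet d m k i))
  rcases mem_insert.mp (h ▸ mem_insert_self u _) with h | h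
  · exact h
  · have := mem_before_iff.mp hu; have := mem_domSet_iff.mp h; omega

/-- Closed form of the contribution of the edges `S_i ∪ {u}` of the `i`-th domination. -/
noncomputable def stageLap (i : Fin d) (f : TV d m k → ℝ) (v : TV d m k) : ℝ :=
  if rank v ≤ 2 * (i : ℕ) then f v - (∑ w ∈ domSet d m k i, f w) / k i
  else if rank v = 2 * (i : ℕ) + 1 then
    (((k i : ℝ) + 1) * #(before d m k i) * f v - ∑ w ∈ before d m k i, f w
      - #(before d m k i) * ∑ w ∈ domSet d m k i, f w) / k i
  else 0

lemma sum_stageEdges_eq_stageLap {i : Fin d} (hk : k i ≠ 0) (f : TV d m k → ℝ) (v : TV d m k) :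
    ∑ u ∈ before d m k i, (if v ∈ insert u (domSet d m k i) then
      1 / ((#(insert u (domSet d m k i)) : ℝ) - 1) *
        ∑ w ∈ insert u (domSet d m k i), (f v - f w) else 0) = stageLap i f v := by
  have hkR : (k i : ℝ) ≠ 0 := by exact_mod_cast hk
  have hedge : ∀ u ∈ before d m k i,
      1 / ((#(insert u (domSet d m k i)) : ℝ) - 1) * ∑ w ∈ insert u (domSet d m k i), (f v - f w)
        = (((k i : ℝ) + 1) * f v - f u - ∑ w ∈ domSet d m k i, f w) / k i := by
    intro u hu
    have hu' : u ∉ domSet d m k i := fun h => by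
      have := mem_before_iff.mp hu; have := mem_domSet_iff.mp h; omega
    rw [card_insert_of_notMem hu', sum_insert hu', sum_sub_distrib, sum_const, card_domSet,
      Nat.cast_add, Nat.cast_one, add_sub_cancel_right, nsmul_eq_mul]
    field_simp
    ring
  rw [← sum_filter, sum_congr rfl fun u hu => hedge u (mem_filter.mp hu).1, stageLap]
  split_ifs with hB hS
  · have : (before d m k i).filter (fun u => v ∈ insert u (domSet d m k i)) = {v} := by
      ext u
      simp only [mem_filter, mem_insert, mem_singleton, mem_before_iff, mem_domSet_iff]
      constructor
      · rintro ⟨-, rfl | h⟩ <;> [rfl; omega]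
      · rintro rfl; exact ⟨hB, Or.inl rfl⟩
    rw [this, sum_singleton]
    field_simp
    ring
  · have : (before d m k i).filter (fun u => v ∈ insert u (domSet d m k i)) = before d m k i :=
      filter_true_of_mem fun u _ => mem_insert_of_mem (mem_domSet_iff.mpr hS)
    rw [this, ← sum_div, sum_sub_distrib, sum_sub_distrib, sum_const, sum_const]
    simp only [nsmul_eq_mul]
    ring
  · have : (before d m k i).filter (fun u => v ∈ insert u (domSet d m k i)) = ∅ := by
      refine filter_false_of_mem fun u hu hv => ?_
      have := rank_le_of_mem_insert_domSet hu hv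
      omega
    rw [this, sum_empty]

lemma lapOp_eq_sum_stageLap (hk : ∀ i, k i ≠ 0) (f : TV d m k → ℝ) :
    lapOp (thrEdges d m k) f = ∑ i, stageLap i f := by
  ext v
  rw [lapOp, sum_filter, thrEdges, sum_biUnion (pairwiseDisjoint_stageEdges hk), Finset.sum_apply]
  refine sum_congr rfl fun i _ => ?_
  rw [sum_image (insert_domSet_injOn i)]
  exact sum_stageEdges_eq_stageLap (hk i) f v

section Stage

variable {i : Fin d} {f : TV d m k → ℝ}

lemma stageLap_eq_zero_of_const (hk : k i ≠ 0) {c : ℝ}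
    (hf : ∀ v, rank v ≤ 2 * (i : ℕ) + 1 → f v = c) : stageLap i f = 0 := by
  have hkR : (k i : ℝ) ≠ 0 := by exact_mod_cast hk
  have hB : ∑ w ∈ before d m k i, f w = #(before d m k i) * c := by
    rw [sum_congr rfl fun w hw => hf w ((mem_before_iff.mp hw).trans (Nat.le_succ _)), sum_const,
      nsmul_eq_mul]
  have hS : ∑ w ∈ domSet d m k i, f w = k i * c := by
    rw [sum_congr rfl fun w hw => hf w (mem_domSet_iff.mp hw).le, sum_const, card_domSet,
      nsmul_eq_mul]
  ext v
  simp only [stageLap, hB, hS, Pi.zero_apply]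
  split_ifs with h₁ h₂
  · rw [hf v (by omega)]; field_simp; ring
  · rw [hf v h₂.le]; field_simp; ring
  · rfl

lemma stageLap_eq_self (hf : ∀ v, 2 * (i : ℕ) < rank v → f v = 0) (hsum : ∑ v, f v = 0) :
    stageLap i f = f := by
  have hB : ∑ w ∈ before d m k i, f w = 0 := by
    rw [sum_subset (subset_univ _) fun v _ hv => hf v (by rwa [mem_before_iff, not_le] at hv),
      hsum]
  have hS : ∑ w ∈ domSet d m k i, f w = 0 :=
    sum_eq_zero fun w hw => hf w (by rw [mem_domSet_iff.mp hw]; omega)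
  ext v
  simp only [stageLap, hB, hS]
  split_ifs with h₁ h₂
  · ring
  · rw [hf v (by omega)]; ring
  · rw [hf v (by omega)]

lemma stageLap_eq_smul_of_supported_domSet (hf : ∀ v, rank v ≠ 2 * (i : ℕ) + 1 → f v = 0)
    (hsum : ∑ v, f v = 0) :
    stageLap i f = ((((k i : ℝ) + 1) * #(before d m k i)) / k i) • f := by
  have hB : ∑ w ∈ before d m k i, f w = 0 :=
    sum_eq_zero fun w hw => hf w (by have := mem_before_iff.mp hw; omega)
  have hS : ∑ w ∈ domSet d m k i, f w = 0 := by
    rw [sum_subset (subset_univ _) fun v _ hv => hf v (by rwa [mem_domSet_iff] at hv), hsum]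
  ext v
  simp only [stageLap, hB, hS, Pi.smul_apply, smul_eq_mul]
  split_ifs with h₁ h₂
  · rw [hf v (by omega)]; ring
  · ring
  · rw [hf v h₂]; ring

lemma stageLap_balancedIndicator (hk : k i ≠ 0) :
    stageLap i (balancedIndicator (before d m k i) (domSet d m k i)) =
      ((#(before d m k i) + k i : ℝ) / k i) •
        balancedIndicator (before d m k i) (domSet d m k i) := by
  have hkR : (k i : ℝ) ≠ 0 := by exact_mod_cast hk
  have hdisj := disjoint_before_domSet (m := m) (k := k) i
  have hB : ∑ w ∈ before d m k i, balancedIndicator (before d m k i) (domSet d m k i) w =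
      #(before d m k i) * k i := by
    rw [sum_congr rfl fun w hw => balancedIndicator_apply_of_mem_left hdisj hw, sum_const,
      card_domSet, nsmul_eq_mul]
  have hS : ∑ w ∈ domSet d m k i, balancedIndicator (before d m k i) (domSet d m k i) w =
      k i * -#(before d m k i) := by
    rw [sum_congr rfl fun w hw => balancedIndicator_apply_of_mem_right hdisj hw, sum_const,
      card_domSet, nsmul_eq_mul]
  ext v
  simp only [stageLap, hB, hS, Pi.smul_apply, smul_eq_mul]
  split_ifs with h₁ h₂
  · rw [balancedIndicator_apply_of_mem_left hdisj (mem_before_iff.mpr h₁), card_domSet]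
    field_simp; ring
  · rw [balancedIndicator_apply_of_mem_right hdisj (mem_domSet_iff.mpr h₂)]
    field_simp; ring
  · rw [balancedIndicator_apply_of_notMem (by rwa [mem_before_iff])
      (by rwa [mem_domSet_iff])]
    ring

end Stage

variable (S : AddSubgroup ℝ)

lemma mem_iSup_eigenspace_of_stageLap (hk : ∀ i, k i ≠ 0) {f : TV d m k → ℝ}
    (h : ∀ j, ∃ a ∈ S, stageLap j f = a • f) :
    f ∈ ⨆ μ ∈ (S : Set ℝ), (lapLinearMap (thrEdges d m k)).eigenspace μ := by
  choose a haS ha using h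
  refine Submodule.mem_iSup_of_mem (∑ j, a j)
    (Submodule.mem_iSup_of_mem (S.sum_mem fun j _ => haS j) ?_)
  rw [Module.End.mem_eigenspace_iff]
  change lapOp _ f = _
  rw [lapOp_eq_sum_stageLap hk, sum_smul]
  exact sum_congr rfl fun j _ => ha j

/-- Stages of rank above `ℓ` fix such a function and stages below `ℓ` kill it, so only the stage
of rank `ℓ` (if any) matters. -/
lemma stageLap_eq_smul_of_layered (hk : ∀ i, k i ≠ 0)
    (hS : ∀ i (a : ℕ), (a : ℝ) / k i ∈ S) {f : TV d m k → ℝ} {ℓ : ℕ} {c : ℝ}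
    (hsupp : ∀ v, ℓ < rank v → f v = 0) (hsum : ∑ v, f v = 0)
    (hconst : ∀ v, rank v < ℓ → f v = c)
    (hmid : ∀ j : Fin d, ℓ = 2 * (j : ℕ) + 1 → ∃ a ∈ S, stageLap j f = a • f) (j : Fin d) :
    ∃ a ∈ S, stageLap j f = a • f := by
  obtain hlt | heq | hge : 2 * (j : ℕ) + 1 < ℓ ∨ ℓ = 2 * (j : ℕ) + 1 ∨ ℓ ≤ 2 * (j : ℕ) := by
    omega
  · refine ⟨0, S.zero_mem, ?_⟩
    rw [stageLap_eq_zero_of_const (hk j) fun v hv => hconst v (by omega), zero_smul]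
  · exact hmid j heq
  · refine ⟨1, by simpa [hk j] using hS j (k j), ?_⟩
    rw [stageLap_eq_self (fun v hv => hsupp v (by omega)) hsum, one_smul]

theorem iSup_eigenspace_lapLinearMap_eq_top (hk : ∀ i, k i ≠ 0)
    (hS : ∀ i (a : ℕ), (a : ℝ) / k i ∈ S) :
    ⨆ μ ∈ (S : Set ℝ), (lapLinearMap (thrEdges d m k)).eigenspace μ = ⊤ := by
  refine Submodule.eq_top_of_balancedIndicator_mem rank ?_ ?_ ?_
  · refine mem_iSup_eigenspace_of_stageLap S hk fun j => ⟨0, S.zero_mem, ?_⟩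
    rw [stageLap_eq_zero_of_const (f := 1) (hk j) (c := 1) fun _ _ => rfl, zero_smul]
  · intro ℓ
    set s : Finset (TV d m k) := {v | rank v ≤ ℓ} with hs
    set t : Finset (TV d m k) := {v | rank v = ℓ + 1} with ht
    have hdisj : Disjoint s t := disjoint_filter.mpr fun v _ h => by omega
    refine mem_iSup_eigenspace_of_stageLap S hk (stageLap_eq_smul_of_layered S hk hS
      (ℓ := ℓ + 1) (c := #t) ?_ (sum_balancedIndicator s t) ?_ ?_)
    · intro v hv
      exact balancedIndicator_apply_of_notMem (by simp [hs]; omega) (by simp [ht]; omega)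
    · intro v hv
      exact balancedIndicator_apply_of_mem_left hdisj (by simp [hs]; omega)
    · intro j hj
      have hB : s = before d m k j := by ext v; rw [mem_before_iff]; simp [hs]; omega
      have hD : t = domSet d m k j := by ext v; rw [mem_domSet_iff]; simp [ht]; omega
      rw [hB, hD]
      refine ⟨_, ?_, stageLap_balancedIndicator (hk j)⟩
      exact_mod_cast hS j (#(before d m k j) + k j)
  · intro ℓ g hg hsum
    refine mem_iSup_eigenspace_of_stageLap S hk
      (stageLap_eq_smul_of_layered S hk hS (ℓ := ℓ) (c := 0) (fun v hv => hg v (by omega)) hsum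
        (fun v hv => hg v (by omega)) fun j hj => ?_)
    refine ⟨_, ?_, stageLap_eq_smul_of_supported_domSet (fun v hv => hg v (by omega)) hsum⟩
    exact_mod_cast hS j ((k j + 1) * #(before d m k j))

end ThresholdHypergraph

theorem stmt_12_general (d : ℕ) (m k : Fin d → ℕ)
    (hk : ∀ i, 1 ≤ k i) :
    ∃ r : ℚ, ∀ (lam : ℝ) (f : TV d m k → ℝ), f ≠ 0 →
      lapOp (thrEdges d m k) f = lam • f → ∃ p : ℤ, lam = (r : ℝ) * p := by
  have hk₀ (i : Fin d) : k i ≠ 0 := Nat.one_le_iff_ne_zero.mp (hk i)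
  have hN : ∏ i, k i ≠ 0 := prod_ne_zero_iff.mpr fun i _ => hk₀ i
  refine ⟨((∏ i, k i : ℕ) : ℚ)⁻¹, fun lam f hf heig => ?_⟩
  have hS (i : Fin d) (a : ℕ) : (a : ℝ) / k i ∈ AddSubgroup.zmultiples ((∏ i, k i : ℕ) : ℝ)⁻¹ :=
    natCast_div_mem_zmultiples (dvd_prod_of_mem k (mem_univ i)) hN a
  obtain ⟨p, hp⟩ := Module.End.mem_of_hasEigenvalue_of_iSup_eigenspace_eq_top
    (ThresholdHypergraph.iSup_eigenspace_lapLinearMap_eq_top _ hk₀ hS)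
    (Module.End.hasEigenvalue_of_hasEigenvector ⟨Module.End.mem_eigenspace_iff.mpr heig, hf⟩)
  exact ⟨p, by rw [← hp]; simp only [zsmul_eq_mul]; push_cast; ring⟩

/-- Every threshold hypergraph is Laplacian `r`-integral for some rational `r`. -/
theorem stmt_12 (d : ℕ) (m k : Fin d → ℕ)
    (hm : ∀ h : 0 < d, 1 ≤ m ⟨0, h⟩) (hk : ∀ i, 1 ≤ k i) :
    ∃ r : ℚ, ∀ (lam : ℝ) (f : TV d m k → ℝ), f ≠ 0 →
      lapOp (thrEdges d m k) f = lam • f → ∃ p : ℤ, lam = (r : ℝ) * p :=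
  stmt_12_general d m k hk
end

section
/- Let G be an m-uniform hypergraph on n vertices with Laplacian eigenvalues 0 = λ₁ ≤ λ₂ ≤ … ≤ λ_n, and let Ḡ be its complement (same vertex set, edge set equal to all m-subsets not in E). Then the Laplacian eigenvalues of Ḡ are 0 together with φ_m(n) − λ_n ≤ … ≤ φ_m(n) − λ₂, where φ_m(n) = (n/(n−1))·C(n−1, m−1). -/
open Finset

/-!
The complete `m`-uniform hypergraph has Laplacian `φ • (1 - J / n)` (`J` the all-ones matrix), so
`L(Ḡ) + (φ / n) • J = φ • 1 - L(G)`. As `L(Ḡ)` kills the constant vectors, `L(Ḡ) * J = 0`, and for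
matrices with `M * N = 0` one has `χ_M χ_N = X ^ n χ_{M + N}`, because
`(X - M)(X - N) = X (X - (M + N))`. Here `χ_{(φ / n) • J} = X ^ (n - 1) (X - φ)` and
`χ_{φ • 1 - L(G)} = ∏ᵢ (X - (φ - λᵢ))`; cancelling `X ^ (n - 1) (X - φ)` leaves
`χ_{L(Ḡ)} = X ∏_{i ≥ 2} (X - (φ - λᵢ))`.
-/

open Polynomial Matrix

namespace Matrix

variable {K : Type*} {ι : Type*} [Fintype ι] [DecidableEq ι]

theorem charpoly_mul_charpoly_of_mul_eq_zero [CommRing K] {M N : Matrix ι ι K} (h : M * N = 0) :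
    M.charpoly * N.charpoly = X ^ Fintype.card ι * (M + N).charpoly := by
  have hMN : charmatrix M * charmatrix N = (X : K[X]) • charmatrix (M + N) := by
    have h' : M.map C * N.map C = 0 := by rw [← Matrix.map_mul, h, Matrix.map_zero _ (map_zero C)]
    have hX : scalar ι (X : K[X]) * M.map C = M.map C * scalar ι X :=
      (scalar_commute X (Commute.all X) _).eq
    simp only [charmatrix, RingHom.mapMatrix_apply, smul_eq_diagonal_mul, ← scalar_apply]
    rw [Matrix.map_add _ (map_add C), sub_mul, mul_sub, mul_sub, h', ← hX]
    noncomm_ring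
  rw [charpoly, charpoly, ← det_mul, hMN, det_smul, charpoly]

theorem charpoly_of_const [CommRing K] [Nonempty ι] (t : K) :
    (of fun _ _ : ι => t).charpoly = X ^ (Fintype.card ι - 1) * (X - C (Fintype.card ι * t)) := by
  have hJ : (of fun _ _ : ι => t) = vecMulVec (fun _ => t) (fun _ => 1) := by
    ext i j; simp [vecMulVec_apply]
  have hk : 1 ≤ Fintype.card ι := Fintype.card_pos
  rw [hJ, charpoly_vecMulVec, smul_eq_C_mul, mul_sub, ← pow_succ, Nat.sub_add_cancel hk]
  simp [dotProduct, mul_comm]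

theorem charpoly_scalar_sub [Field K] [Infinite K] {A : Matrix ι ι K} (hA : A.charpoly.Splits)
    (c : K) : (scalar ι c - A).charpoly = ((A.charpoly.roots.map (c - ·)).map (X - C ·)).prod := by
  refine Polynomial.funext fun x => ?_
  have hneg : scalar ι x - (scalar ι c - A) = -(scalar ι (c - x) - A) := by
    rw [map_sub]; abel
  have hcard : Multiset.card A.charpoly.roots = Fintype.card ι := by
    rw [splits_iff_card_roots.mp hA, charpoly_natDegree_eq_dim]
  rw [eval_charpoly, hneg, det_neg, ← eval_charpoly, hA.eval_eq_prod_roots,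
    (charpoly_monic A).leadingCoeff, one_mul, eval_multiset_prod, Multiset.map_map,
    Multiset.map_map, ← hcard, ← Multiset.card_map (c - x - ·), ← Multiset.prod_map_neg,
    Multiset.map_map]
  congr 1
  refine Multiset.map_congr rfl fun r _ => ?_
  simp only [Function.comp_apply, eval_sub, eval_X, eval_C]
  ring

theorem roots_charpoly_of_add_const_eq_scalar_sub [Field K] [Infinite K] [Nonempty ι]
    {A B : Matrix ι ι K} {c t : K} {μ : Multiset K} (hB : B *ᵥ (fun _ => 1) = 0)
    (hBA : B + of (fun _ _ => t) = scalar ι c - A) (hct : (Fintype.card ι : K) * t = c)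
    (hA : A.charpoly.Splits) (h : A.charpoly.roots = 0 ::ₘ μ) :
    B.charpoly.roots = 0 ::ₘ μ.map (c - ·) := by
  have hBJ : B * of (fun _ _ => t) = 0 := by
    ext i j
    simpa [mul_apply, mulVec, dotProduct, ← Finset.sum_mul] using
      congrArg (· * t) (congrFun hB i)
  have hprod := charpoly_mul_charpoly_of_mul_eq_zero hBJ
  rw [hBA, charpoly_of_const, hct, charpoly_scalar_sub hA, h, Multiset.map_cons,
    Multiset.map_cons, Multiset.prod_cons, sub_zero] at hprod
  set P := ((μ.map (c - ·)).map (X - C ·)).prod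
  have hBchar : B.charpoly = X * P := by
    obtain ⟨k, hk⟩ := Nat.exists_eq_add_one.mpr (Fintype.card_pos (α := ι))
    rw [hk, Nat.add_sub_cancel] at hprod
    refine mul_right_cancel₀ (mul_ne_zero (pow_ne_zero k X_ne_zero) (X_sub_C_ne_zero c)) ?_
    rw [hprod]
    ring
  rw [hBchar, ← roots_multiset_prod_X_sub_C (0 ::ₘ μ.map (c - ·)), Multiset.map_cons,
    Multiset.prod_cons, map_zero, sub_zero]

end Matrix

/-- The paper's `φ_m(n)`: the nonzero Laplacian eigenvalue of the complete `m`-uniform hypergraph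
on `n` vertices. -/
noncomputable def completeLapEigenvalue (n m : ℕ) : ℝ :=
  (n : ℝ) / ((n : ℝ) - 1) * ((n - 1).choose (m - 1) : ℝ)

theorem completeLapEigenvalue_sub_div (n : ℕ) {m : ℕ} (hm : 2 ≤ m) :
    completeLapEigenvalue n m - completeLapEigenvalue n m / n = (n - 1).choose (m - 1) := by
  unfold completeLapEigenvalue
  rcases le_or_gt n 1 with hn | hn
  · rw [Nat.choose_eq_zero_of_lt (by omega)]
    simp
  · have : (n : ℝ) - 1 ≠ 0 := by
      rw [sub_ne_zero]; exact_mod_cast hn.ne'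
    field_simp

theorem completeLapEigenvalue_div {n m : ℕ} (hn : 2 ≤ n) (hm : 2 ≤ m) :
    completeLapEigenvalue n m / n = (n - 2).choose (m - 2) / ((m : ℝ) - 1) := by
  have hpascal :
      ((n - 1 : ℕ) : ℝ) * (n - 2).choose (m - 2) = (n - 1).choose (m - 1) * (m - 1 : ℕ) := by
    have := Nat.add_one_mul_choose_eq (n - 2) (m - 2)
    rw [show n - 2 + 1 = n - 1 by omega, show m - 2 + 1 = m - 1 by omega] at this
    exact_mod_cast this
  push_cast [Nat.cast_sub (by omega : 1 ≤ n), Nat.cast_sub (by omega : 1 ≤ m)] at hpascal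
  have hn1 : (n : ℝ) - 1 ≠ 0 := by rw [sub_ne_zero]; exact_mod_cast (by omega : n ≠ 1)
  have hm1 : (m : ℝ) - 1 ≠ 0 := by rw [sub_ne_zero]; exact_mod_cast (by omega : m ≠ 1)
  have hn0 : (n : ℝ) ≠ 0 := by exact_mod_cast (by omega : n ≠ 0)
  unfold completeLapEigenvalue
  field_simp
  linear_combination -hpascal

section Laplacian

variable {V : Type} [Fintype V] [DecidableEq V]

theorem lapMatrix_mulVec_one (E : Finset (Finset V)) : lapMatrix E *ᵥ (fun _ => 1) = 0 := by
  ext v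
  simp only [mulVec, dotProduct, lapMatrix, of_apply, mul_one, Pi.zero_apply]
  rw [Finset.sum_comm]
  refine Finset.sum_eq_zero fun e _ => ?_
  simp [← Finset.mul_sum, Finset.sum_sub_distrib]

theorem lapMatrix_isHermitian (E : Finset (Finset V)) : (lapMatrix E).IsHermitian := by
  ext v w
  simp only [conjTranspose_apply, star_trivial, lapMatrix, of_apply, Finset.sum_filter]
  refine Finset.sum_congr rfl fun e _ => ?_
  rcases eq_or_ne v w with rfl | hvw
  · rfl
  · by_cases hv : v ∈ e <;> by_cases hw : w ∈ e <;> simp [hv, hw, hvw, hvw.symm]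

theorem lapMatrix_sdiff {E F : Finset (Finset V)} (hEF : E ⊆ F) :
    lapMatrix (F \ E) = lapMatrix F - lapMatrix E := by
  ext v w
  simp only [lapMatrix, of_apply, Matrix.sub_apply, Finset.sum_filter]
  exact Finset.sum_sdiff_eq_sub hEF

theorem lapMatrix_apply_self {E : Finset (Finset V)} (hE : ∀ e ∈ E, e.card ≠ 1) (v : V) :
    lapMatrix E v v = #{e ∈ E | v ∈ e} := by
  rw [lapMatrix, of_apply, Finset.card_eq_sum_ones, Nat.cast_sum, Nat.cast_one]
  refine Finset.sum_congr rfl fun e he => ?_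
  obtain ⟨he, hv⟩ := Finset.mem_filter.mp he
  have : (e.card : ℝ) - 1 ≠ 0 := by rw [sub_ne_zero]; exact_mod_cast hE e he
  simp [hv, this]

theorem lapMatrix_apply_of_ne {E : Finset (Finset V)} {m : ℕ} (hE : ∀ e ∈ E, e.card = m)
    {v w : V} (hvw : v ≠ w) : lapMatrix E v w = -#{e ∈ E | v ∈ e ∧ w ∈ e} / ((m : ℝ) - 1) := by
  rw [lapMatrix, of_apply, ← Finset.filter_filter, Finset.card_filter, Nat.cast_sum,
    ← Finset.sum_neg_distrib, Finset.sum_div]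
  refine Finset.sum_congr rfl fun e he => ?_
  rw [hE e (Finset.mem_filter.mp he).1]
  split_ifs <;> simp_all [div_eq_inv_mul, hvw.symm]

theorem card_filter_mem_powersetCard_univ (v : V) {m : ℕ} (hm : 1 ≤ m) :
    #{e ∈ Finset.univ.powersetCard m | v ∈ e} = (Fintype.card V - 1).choose (m - 1) := by
  simpa using Finset.card_filter_powersetCard_subset {v} Finset.univ m (Finset.subset_univ _)
    (by simpa using hm)

theorem card_filter_mem_mem_powersetCard_univ {v w : V} (hvw : v ≠ w) {m : ℕ} (hm : 2 ≤ m) :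
    #{e ∈ Finset.univ.powersetCard m | v ∈ e ∧ w ∈ e} = (Fintype.card V - 2).choose (m - 2) := by
  have := Finset.card_filter_powersetCard_subset {v, w} Finset.univ m (Finset.subset_univ _)
    (by rwa [Finset.card_pair hvw])
  simpa [Finset.card_pair hvw, Finset.insert_subset_iff] using this

theorem lapMatrix_powersetCard_add_const {m : ℕ} (hm : 2 ≤ m) :
    lapMatrix (Finset.univ.powersetCard m : Finset (Finset V)) +
        of (fun _ _ => completeLapEigenvalue (Fintype.card V) m / Fintype.card V) =
      scalar V (completeLapEigenvalue (Fintype.card V) m) := by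
  ext v w
  rw [Matrix.add_apply, of_apply, scalar_apply, diagonal_apply]
  rcases eq_or_ne v w with rfl | hvw
  · rw [lapMatrix_apply_self (fun e he => by rw [Finset.mem_powersetCard_univ.mp he]; omega),
      card_filter_mem_powersetCard_univ v (by omega), if_pos rfl,
      ← completeLapEigenvalue_sub_div _ hm, sub_add_cancel]
  · have hV : 2 ≤ Fintype.card V := Fintype.one_lt_card_iff.mpr ⟨v, w, hvw⟩
    rw [lapMatrix_apply_of_ne (fun e he => Finset.mem_powersetCard_univ.mp he) hvw,
      card_filter_mem_mem_powersetCard_univ hvw hm, if_neg hvw, completeLapEigenvalue_div hV hm,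
      neg_div, neg_add_cancel]

end Laplacian

/-- Spectrum of the complement of an `m`-uniform hypergraph on `n` vertices: the nonzero
eigenvalues become `φ_m(n) - λ` with `φ_m(n) = (n/(n-1))·C(n-1, m-1)`. -/
theorem stmt_13 {V : Type} [Fintype V] [DecidableEq V] [Nonempty V]
    (mu : ℕ) (hmu : 2 ≤ mu) (E : Finset (Finset V)) (hE : ∀ e ∈ E, e.card = mu)
    (μ : Multiset ℝ) (h : (lapMatrix E).charpoly.roots = (0 : ℝ) ::ₘ μ) :
    (lapMatrix ((Finset.univ.powersetCard mu) \ E)).charpoly.roots =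
      (0 : ℝ) ::ₘ μ.map (fun l =>
        (Fintype.card V : ℝ) / ((Fintype.card V : ℝ) - 1) *
          ((Fintype.card V - 1).choose (mu - 1) : ℝ) - l) := by
  have hsub : E ⊆ Finset.univ.powersetCard mu :=
    fun e he => Finset.mem_powersetCard_univ.mpr (hE e he)
  have hV : (Fintype.card V : ℝ) ≠ 0 := Nat.cast_ne_zero.mpr Fintype.card_ne_zero
  refine roots_charpoly_of_add_const_eq_scalar_sub (lapMatrix_mulVec_one _) ?_ ?_
    (lapMatrix_isHermitian E).splits_charpoly h
    (c := completeLapEigenvalue (Fintype.card V) mu)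
    (t := completeLapEigenvalue (Fintype.card V) mu / Fintype.card V)
  · rw [lapMatrix_sdiff hsub, sub_add_eq_add_sub, lapMatrix_powersetCard_add_const hmu]
  · exact mul_div_cancel₀ _ hV
end

section
/- If G is a hypergraph on n vertices that is Laplacian (1/q)-integral for some q ∈ ℕ, then its m-uniform complement Ḡ is Laplacian (1/(q(n−1)))-integral. -/
open Finset

/-!
Every edge set `E` of an `m`-uniform hypergraph lies in the complete one `K = (univ).powersetCard m`,
and `L_{K \ E} = L_K - L_E`. Any two distinct vertices lie in `C(n-2, m-2)` common edges of `K`,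
so `L_K f = φ • f` with `φ = n C(n-2, m-2)/(m-1) = n C(n-1, m-1)/(n-1)` whenever `∑ f = 0`, which
holds for every eigenvector of a nonzero eigenvalue. Hence an eigenvalue `λ ≠ 0` of `L_{K \ E}` gives
the eigenvalue `φ - λ = p/q` of `L_E`, and `λ = (q n C(n-1, m-1) - p (n-1)) / (q (n-1))`.
-/

namespace lapOp

variable {V : Type} [Fintype V] [DecidableEq V]

@[simp]
lemma empty (f : V → ℝ) : lapOp ∅ f = 0 := by
  ext v
  simp [lapOp]

lemma sdiff {A B : Finset (Finset V)} (hBA : B ⊆ A) (f : V → ℝ) (v : V) :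
    lapOp (A \ B) f v = lapOp A f v - lapOp B f v := by
  simp only [lapOp, sum_filter]
  exact sum_sdiff_eq_sub hBA

lemma sum_eq_zero (E : Finset (Finset V)) (f : V → ℝ) : ∑ v, lapOp E f v = 0 := by
  simp only [lapOp, sum_filter]
  rw [sum_comm]
  refine Finset.sum_eq_zero fun e _ => ?_
  rw [← sum_filter, filter_mem_eq_inter, univ_inter, ← mul_sum]
  have hanti : ∑ v ∈ e, ∑ u ∈ e, (f v - f u) = 0 := by
    simp only [sum_sub_distrib]
    rw [sum_comm (f := fun _ u => f u), sub_self]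
  rw [hanti, mul_zero]

lemma eq_sum_codegree {mu : ℕ} {E : Finset (Finset V)} (hE : ∀ e ∈ E, e.card = mu)
    (f : V → ℝ) (v : V) :
    lapOp E f v = 1 / ((mu : ℝ) - 1) * ∑ u, (#{e ∈ E | v ∈ e ∧ u ∈ e} : ℝ) * (f v - f u) := by
  have hedge : ∀ e ∈ E.filter (v ∈ ·), 1 / ((e.card : ℝ) - 1) * ∑ u ∈ e, (f v - f u)
      = 1 / ((mu : ℝ) - 1) * ∑ u, if u ∈ e then f v - f u else 0 := fun e he => by
    rw [hE e (mem_filter.1 he).1, sum_ite_mem, univ_inter]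
  rw [lapOp, sum_congr rfl hedge, ← mul_sum, sum_comm]
  congr 1
  refine sum_congr rfl fun u _ => ?_
  rw [← sum_filter, sum_const, filter_filter, nsmul_eq_mul]

end lapOp

lemma card_filter_mem_powersetCard {V : Type} [Fintype V] [DecidableEq V] {u v : V} (huv : u ≠ v)
    {mu : ℕ} (hmu : 2 ≤ mu) :
    #{e ∈ univ.powersetCard mu | v ∈ e ∧ u ∈ e} = Nat.choose (Fintype.card V - 2) (mu - 2) := by
  have hcard : #({v, u} : Finset V) = 2 := card_pair huv.symm
  rw [← hcard, ← card_univ, ← card_filter_powersetCard_subset _ _ _ (subset_univ _) (by omega)]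
  simp only [insert_subset_iff, singleton_subset_iff]

lemma lapOp_powersetCard {V : Type} [Fintype V] [DecidableEq V] {mu : ℕ} (hmu : 2 ≤ mu)
    (f : V → ℝ) (v : V) :
    lapOp (univ.powersetCard mu) f v =
      (Nat.choose (Fintype.card V - 2) (mu - 2) : ℝ) / ((mu : ℝ) - 1) *
        ((Fintype.card V : ℝ) * f v - ∑ u, f u) := by
  have hcodeg : ∀ u, (#{e ∈ univ.powersetCard mu | v ∈ e ∧ u ∈ e} : ℝ) * (f v - f u)
      = Nat.choose (Fintype.card V - 2) (mu - 2) * (f v - f u) := fun u => by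
    rcases eq_or_ne u v with rfl | huv
    · simp
    · rw [card_filter_mem_powersetCard huv hmu]
  rw [lapOp.eq_sum_codegree (fun e he => (mem_powersetCard.1 he).2), sum_congr rfl fun u _ => hcodeg u,
    ← mul_sum, sum_sub_distrib, sum_const, card_univ, nsmul_eq_mul]
  ring

lemma sum_eq_zero_of_lapOp_eq_smul {V : Type} [Fintype V] [DecidableEq V] {E : Finset (Finset V)}
    {f : V → ℝ} {lam : ℝ} (heig : lapOp E f = lam • f) (hlam : lam ≠ 0) : ∑ v, f v = 0 := by
  have h := lapOp.sum_eq_zero E f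
  simp only [heig, Pi.smul_apply, smul_eq_mul, ← mul_sum] at h
  exact (mul_eq_zero.1 h).resolve_left hlam

lemma nonempty_of_lapOp_eq_smul {V : Type} [Fintype V] [DecidableEq V] {E : Finset (Finset V)}
    {f : V → ℝ} {lam : ℝ} (heig : lapOp E f = lam • f) (hf : f ≠ 0) (hlam : lam ≠ 0) :
    E.Nonempty := by
  rw [nonempty_iff_ne_empty]
  rintro rfl
  exact smul_ne_zero hlam hf (heig ▸ lapOp.empty f)

lemma choose_sub_two_div_eq {n mu : ℕ} (hn : 2 ≤ n) (hmu : 2 ≤ mu) :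
    (Nat.choose (n - 2) (mu - 2) : ℝ) / ((mu : ℝ) - 1) =
      (Nat.choose (n - 1) (mu - 1) : ℝ) / ((n : ℝ) - 1) := by
  have hid := Nat.add_one_mul_choose_eq (n - 2) (mu - 2)
  rw [show n - 2 + 1 = n - 1 by omega, show mu - 2 + 1 = mu - 1 by omega] at hid
  have hidR := congrArg (Nat.cast : ℕ → ℝ) hid
  push_cast [Nat.cast_sub (by omega : 1 ≤ n), Nat.cast_sub (by omega : 1 ≤ mu)] at hidR
  have hn' : (n : ℝ) - 1 ≠ 0 := by
    have : (2 : ℝ) ≤ n := by exact_mod_cast hn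
    linarith
  have hmu' : (mu : ℝ) - 1 ≠ 0 := by
    have : (2 : ℝ) ≤ mu := by exact_mod_cast hmu
    linarith
  rw [div_eq_div_iff hmu' hn']
  linarith

/-- If an `m`-uniform hypergraph on `n` vertices is Laplacian `(1/q)`-integral, then its
complement is Laplacian `(1/(q(n-1)))`-integral. -/
theorem stmt_14 {V : Type} [Fintype V] [DecidableEq V]
    (mu : ℕ) (hmu : 2 ≤ mu) (E : Finset (Finset V)) (hE : ∀ e ∈ E, e.card = mu)
    (q : ℕ) (hq : 0 < q)
    (h : ∀ (lam : ℝ) (f : V → ℝ), f ≠ 0 → lapOp E f = lam • f →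
      ∃ p : ℤ, lam = (p : ℝ) / q) :
    ∀ (lam : ℝ) (f : V → ℝ), f ≠ 0 →
      lapOp ((Finset.univ.powersetCard mu) \ E) f = lam • f →
      ∃ p : ℤ, lam = (p : ℝ) / ((q : ℝ) * ((Fintype.card V : ℝ) - 1)) := by
  intro lam f hf heig
  rcases eq_or_ne lam 0 with rfl | hlam
  · exact ⟨0, by simp⟩
  set n := Fintype.card V
  have hsum := sum_eq_zero_of_lapOp_eq_smul heig hlam
  have hmun : mu ≤ n := by
    simpa using powersetCard_nonempty.1 ((nonempty_of_lapOp_eq_smul heig hf hlam).mono sdiff_subset)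
  have hEK : E ⊆ univ.powersetCard mu := fun e he => mem_powersetCard.2 ⟨subset_univ e, hE e he⟩
  have heigE : lapOp E f =
      ((Nat.choose (n - 1) (mu - 1) : ℝ) / ((n : ℝ) - 1) * n - lam) • f := by
    ext v
    have hv := lapOp.sdiff hEK f v
    rw [heig, lapOp_powersetCard hmu, hsum, choose_sub_two_div_eq (hmu.trans hmun) hmu] at hv
    simp only [Pi.smul_apply, smul_eq_mul] at hv ⊢
    linarith
  obtain ⟨p, hp⟩ := h _ f hf heigE
  refine ⟨q * n * Nat.choose (n - 1) (mu - 1) - p * (n - 1), ?_⟩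
  have hn' : (n : ℝ) - 1 ≠ 0 := by
    have : (2 : ℝ) ≤ n := by exact_mod_cast hmu.trans hmun
    linarith
  have hq' : (q : ℝ) ≠ 0 := by positivity
  rw [eq_div_iff (mul_ne_zero hq' hn')]
  field_simp at hp
  push_cast
  linear_combination -hp
end

section
/- Let G₁ be obtained from a finite hypergraph G = (V, E) by adding a k-dominating set S, and let y_i (i = 2, …, k) be the functions on V ∪ S taking value 1 at a fixed v₁ ∈ S, −1 at v_i ∈ S, and 0 elsewhere. Then for every vertex v ∈ V (an original vertex), (L_{G₁} y_i)(v) = 0. -/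
open Finset

/-- The function taking value `1` at the first dominating vertex, `-1` at the `i`-th one and
`0` elsewhere. -/
noncomputable def yFun {V : Type} (k : ℕ) (i : Fin k) : V ⊕ Fin k → ℝ :=
  Sum.elim (fun _ => 0) (fun j => if j.val = 0 then 1 else if j = i then -1 else 0)

/-- `(L_{G₁} y_i)(v) = 0` at every original vertex `v ∈ V`. -/
theorem stmt_17 {V : Type} [Fintype V] [DecidableEq V]
    (E : Finset (Finset V)) (hE : ∀ e ∈ E, 2 ≤ e.card) (k : ℕ) (hk : 2 ≤ k)
    (i : Fin k) (hi : i.val ≠ 0) :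
    ∀ v : V, lapOp (domEdges E k) (yFun k i) (Sum.inl v) = 0 := by
  intro v
  unfold lapOp
  apply Finset.sum_eq_zero
  intro e he
  rw [Finset.mem_filter] at he
  obtain ⟨he, hv⟩ := he
  have hsum : ∑ u ∈ e, yFun k i u = 0 := by
    unfold domEdges at he
    rw [Finset.mem_union] at he
    rcases he with he | he
    · obtain ⟨e', _, rfl⟩ := Finset.mem_image.mp he
      rw [Finset.sum_image (fun a _ b _ h => Sum.inl.inj h)]
      simp [yFun]
    · obtain ⟨u, _, rfl⟩ := Finset.mem_image.mp he
      rw [Finset.sum_insert (by simp)]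
      rw [Finset.sum_image (fun a _ b _ h => Sum.inr.inj h)]
      have h0 : 0 < k := by omega
      have key : ∀ j : Fin k, yFun (V := V) k i (Sum.inr j) =
          (if j = (⟨0, h0⟩ : Fin k) then (1:ℝ) else 0) + (if j = i then (-1:ℝ) else 0) := by
        intro j
        simp only [yFun, Sum.elim_inr]
        rcases eq_or_ne j (⟨0, h0⟩ : Fin k) with rfl | hj
        · have : (⟨0, h0⟩ : Fin k) ≠ i := by
            intro h; exact hi (by rw [← h])
          simp [this]
        · have hj' : j.val ≠ 0 := by
            intro h; exact hj (Fin.ext h)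
          simp [hj', hj]
      have h01 : yFun k i (Sum.inl u) = 0 := rfl
      rw [h01, Finset.sum_congr rfl (fun j _ => key j), Finset.sum_add_distrib]
      simp
  have h0 : yFun k i (Sum.inl v) = 0 := rfl
  rw [Finset.sum_sub_distrib, hsum, h0]
  simp
end

section
/- The number of dominations d used to construct a k-threshold hypergraph is determined by its degree sequence: if D_s denotes the width of the s-th block from the top of the Ferrer's diagram of the degree sequence (i.e., the s-th largest distinct degree), then d = min{s ∈ ℕ : D_s < s} − 1; that is, D_d ≥ d and D_{d+1} < d + 1. -/
/-! The `k` vertices added by the `j`-th domination all have the same degree `domDegree m k j`;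
these `d` values are at least `d` and strictly increase with `j`, because each step adds
`m_{j+1} + k ≥ 2` to the first summand and removes only `1` from the last. An isolated vertex
lies in at most one edge per domination, so its degree is at most `d`. Hence at least `d` distinct
degrees are `≥ d` and at most `d` are `> d`: in the decreasing list of distinct degrees the first
`d` entries are `≥ d` and the `(d+1)`-st is `≤ d`. -/

open Finset

theorem List.Pairwise.apply_getElem_iff_lt_countP {α : Type*} [LinearOrder α] {l : List α}
    (hl : l.Pairwise (· ≥ ·)) {p : α → Prop} [DecidablePred p] (hp : Monotone p)
    {i : ℕ} (hi : i < l.length) : p l[i] ↔ i < l.countP (p ·) := by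
  induction l generalizing i with
  | nil => simp at hi
  | cons a t ih =>
    rw [List.pairwise_cons] at hl
    rw [List.countP_cons]
    by_cases ha : p a
    · cases i with
      | zero => simp [ha]
      | succ i => simp [ha, ih hl.2 (by simpa using hi)]
    · have ht : ∀ x ∈ t, ¬ p x := fun x hx hpx => ha (hp (hl.1 x hx) hpx)
      have h0 : t.countP (p ·) = 0 := List.countP_eq_zero.2 (by simpa using ht)
      cases i with
      | zero => simp [ha, h0]
      | succ i => simp [ha, h0, ht _ (List.getElem_mem _)]

theorem Finset.countP_sort {α : Type*} (s : Finset α) (r : α → α → Prop) [DecidableRel r]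
    [IsTrans α r] [Std.Antisymm r] [Std.Total r] (p : α → Prop) [DecidablePred p] :
    (s.sort r).countP (fun x => decide (p x)) = #{x ∈ s | p x} := by
  rw [(s.sort_perm_toList r).countP_eq, ← Multiset.coe_countP, coe_toList,
    Multiset.countP_eq_card_filter]
  rfl

section SortReverse
variable {α : Type*} [LinearOrder α] (s : Finset α) {c x₀ : α} {i : ℕ}

theorem Finset.le_getD_sort_reverse (h : i < #{x ∈ s | c ≤ x}) :
    c ≤ (s.sort (· ≤ ·)).reverse.getD i x₀ := by
  have hsorted : (s.sort (· ≤ ·)).reverse.Pairwise (· ≥ ·) :=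
    List.pairwise_reverse.2 (s.pairwise_sort _)
  have hcount :
      (s.sort (· ≤ ·)).reverse.countP (fun x => decide (c ≤ x)) = #{x ∈ s | c ≤ x} := by
    rw [List.countP_reverse, countP_sort]
  have hi : i < (s.sort (· ≤ ·)).reverse.length :=
    (hcount ▸ h).trans_le List.countP_le_length
  rw [List.getD_eq_getElem _ _ hi]
  exact (hsorted.apply_getElem_iff_lt_countP (fun _ _ hab hca => hca.trans hab) hi).2
    (hcount ▸ h)

theorem Finset.getD_sort_reverse_le (hx₀ : x₀ ≤ c) (h : #{x ∈ s | c < x} ≤ i) :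
    (s.sort (· ≤ ·)).reverse.getD i x₀ ≤ c := by
  have hsorted : (s.sort (· ≤ ·)).reverse.Pairwise (· ≥ ·) :=
    List.pairwise_reverse.2 (s.pairwise_sort _)
  have hcount :
      (s.sort (· ≤ ·)).reverse.countP (fun x => decide (c < x)) = #{x ∈ s | c < x} := by
    rw [List.countP_reverse, countP_sort]
  by_cases hi : i < (s.sort (· ≤ ·)).reverse.length
  · rw [List.getD_eq_getElem _ _ hi, ← not_lt,
      hsorted.apply_getElem_iff_lt_countP (p := (c < ·))
        (fun _ _ hab hca => hca.trans_le hab) hi, hcount]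
    omega
  · rwa [List.getD_eq_default _ _ (not_lt.1 hi)]

end SortReverse

theorem Finset.find_getD_sort_reverse_lt_eq (V : Finset ℕ) (d : ℕ)
    (hge : d ≤ #{x ∈ V | d ≤ x}) (hlt : #{x ∈ V | d < x} ≤ d) :
    let D : ℕ → ℕ := fun i => ((V.sort (· ≤ ·)).reverse).getD (i - 1) 0
    ∀ hex : ∃ s, D s < s, Nat.find hex = d + 1 ∧ d ≤ D d ∧ D (d + 1) < d + 1 := by
  intro D hex
  have hle : ∀ s ≤ d, s ≤ D s := fun s hs => by
    rcases Nat.eq_zero_or_pos s with rfl | hs0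
    · exact Nat.zero_le _
    · exact hs.trans (V.le_getD_sort_reverse (by omega))
  have hlast : D (d + 1) < d + 1 :=
    Nat.lt_succ_of_le (V.getD_sort_reverse_le (Nat.zero_le d) (by simpa using hlt))
  exact ⟨(Nat.find_eq_iff hex).2 ⟨hlast, fun s hs => not_lt.2 (hle s (by omega))⟩,
    hle d le_rfl, hlast⟩

def vertexDegree {V : Type} [DecidableEq V] (E : Finset (Finset V)) (v : V) : ℕ :=
  #{e ∈ E | v ∈ e}

section ThresholdHypergraph
variable {d : ℕ} {m k : Fin d → ℕ}

@[simp] lemma inr_mem_before {i t : Fin d} {c : Fin (k t)} :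
    (Sum.inr ⟨t, c⟩ : TV d m k) ∈ before d m k i ↔ t < i := by
  simp [before, Sigma.ext_iff]

@[simp] lemma inl_notMem_domSet {i t : Fin d} {a : Fin (m t)} :
    (Sum.inl ⟨t, a⟩ : TV d m k) ∉ domSet d m k i := by
  simp [domSet]

@[simp] lemma inr_mem_domSet {i t : Fin d} {c : Fin (k t)} :
    (Sum.inr ⟨t, c⟩ : TV d m k) ∈ domSet d m k i ↔ t = i := by
  constructor
  · simp +contextual [domSet, Sigma.ext_iff]
  · rintro rfl
    exact mem_image_of_mem _ (mem_univ c)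

lemma notMem_domSet_of_mem_before {i : Fin d} {u : TV d m k} (hu : u ∈ before d m k i) :
    u ∉ domSet d m k i := by
  rcases u with ⟨t, a⟩ | ⟨t, c⟩
  · exact inl_notMem_domSet
  · simpa using (inr_mem_before.1 hu).ne

lemma le_of_inr_mem_insert_domSet {i t : Fin d} {u : TV d m k} (hu : u ∈ before d m k i)
    {c : Fin (k t)} (h : (Sum.inr ⟨t, c⟩ : TV d m k) ∈ insert u (domSet d m k i)) :
    t ≤ i := by
  rcases mem_insert.1 h with rfl | h
  · exact (inr_mem_before.1 hu).le
  · exact (inr_mem_domSet.1 h).le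

lemma eq_of_insert_domSet_eq (hk : ∀ i, 0 < k i) {i i' : Fin d} {u u' : TV d m k}
    (hu : u ∈ before d m k i) (hu' : u' ∈ before d m k i')
    (h : insert u (domSet d m k i) = insert u' (domSet d m k i')) : i = i' ∧ u = u' := by
  -- the domination index of an edge is the largest index of a dominating-set vertex in it
  have hmem : ∀ j, (Sum.inr ⟨j, ⟨0, hk j⟩⟩ : TV d m k) ∈ domSet d m k j := by simp
  obtain rfl : i = i' := le_antisymm
    (le_of_inr_mem_insert_domSet hu' (h ▸ mem_insert_of_mem (hmem i)))
    (le_of_inr_mem_insert_domSet hu (h.symm ▸ mem_insert_of_mem (hmem i')))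
  have hu_mem : u ∈ insert u' (domSet d m k i) := h ▸ mem_insert_self u _
  exact ⟨rfl, (mem_insert.1 hu_mem).resolve_right (notMem_domSet_of_mem_before hu)⟩

lemma vertexDegree_thrEdges (hk : ∀ i, 0 < k i) (v : TV d m k) :
    vertexDegree (thrEdges d m k) v
      = ∑ i, #{u ∈ before d m k i | v ∈ insert u (domSet d m k i)} := by
  rw [vertexDegree, thrEdges, filter_biUnion, card_biUnion]
  · refine sum_congr rfl fun i _ => ?_
    rw [filter_image, card_image_of_injOn fun u hu u' hu' h =>
      (eq_of_insert_domSet_eq hk (mem_filter.1 hu).1 (mem_filter.1 hu').1 h).2]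
  · intro i _ i' _ hne
    simp only [Function.onFun, disjoint_left, mem_filter, mem_image]
    rintro _ ⟨⟨u, hu, rfl⟩, -⟩ ⟨⟨u', hu', h⟩, -⟩
    exact hne (eq_of_insert_domSet_eq hk hu' hu h).1.symm

lemma card_filter_mem_insert_domSet {i : Fin d} {v : TV d m k} (hv : v ∉ domSet d m k i) :
    #{u ∈ before d m k i | v ∈ insert u (domSet d m k i)} =
      if v ∈ before d m k i then 1 else 0 := by
  have : ∀ u ∈ before d m k i, v ∈ insert u (domSet d m k i) ↔ u = v := fun u _ => by
    simp [hv, eq_comm]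
  rw [filter_congr this, filter_eq']
  split_ifs <;> rfl

lemma vertexDegree_inl_le (hk : ∀ i, 0 < k i) (j : Fin d) (a : Fin (m j)) :
    vertexDegree (thrEdges d m k) (Sum.inl ⟨j, a⟩) ≤ d := by
  rw [vertexDegree_thrEdges hk]
  calc ∑ i, #{u ∈ before d m k i | Sum.inl ⟨j, a⟩ ∈ insert u (domSet d m k i)}
      ≤ ∑ _i : Fin d, 1 := sum_le_sum fun i _ => by
        rw [card_filter_mem_insert_domSet inl_notMem_domSet]
        split_ifs <;> simp
    _ = d := by simp

lemma vertexDegree_inr (hk : ∀ i, 0 < k i) (j : Fin d) (b : Fin (k j)) :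
    vertexDegree (thrEdges d m k) (Sum.inr ⟨j, b⟩) = #(before d m k j) + #(Ioi j) := by
  rw [vertexDegree_thrEdges hk]
  have hterm : ∀ i, #{u ∈ before d m k i | Sum.inr ⟨j, b⟩ ∈ insert u (domSet d m k i)}
      = (if j = i then #(before d m k i) else 0) + if j < i then 1 else 0 := fun i => by
    by_cases hji : j = i
    · subst hji
      rw [filter_true_of_mem fun u _ => mem_insert_of_mem (inr_mem_domSet.2 rfl)]
      simp
    · rw [card_filter_mem_insert_domSet (by simpa using hji)]
      simp [hji]
  rw [sum_congr rfl fun i _ => hterm i, sum_add_distrib, sum_ite_eq, sum_boole,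
    filter_lt_eq_Ioi]
  simp

lemma card_before (i : Fin d) :
    #(before d m k i) = ∑ l ∈ Iic i, m l + ∑ l ∈ Iio i, k l := by
  rw [before, card_union_of_disjoint, card_image_of_injective _ Sum.inl_injective,
    card_image_of_injective _ Sum.inr_injective, card_sigma, card_sigma, filter_ge_eq_Iic,
    filter_gt_eq_Iio]
  · simp
  · simp [disjoint_left]

end ThresholdHypergraph

section ConstantDomination
variable {d : ℕ} {m : Fin d → ℕ} {k : ℕ}

/-- `0`-indexed form of the paper's degree `Σ_{j ≤ i} m_j + k(i - 1) + (d - i)` of the vertices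
added by the `i`-th domination. -/
def domDegree (m : Fin d → ℕ) (k : ℕ) (j : Fin d) : ℕ :=
  ∑ l ∈ Iic j, m l + k * j + (d - 1 - j)

lemma vertexDegree_inr_eq_domDegree (hk : 0 < k) (j : Fin d) (b : Fin k) :
    vertexDegree (thrEdges d m fun _ => k) (Sum.inr ⟨j, b⟩) = domDegree m k j := by
  rw [vertexDegree_inr (fun _ => hk), card_before, sum_const, Fin.card_Iio, Fin.card_Ioi,
    smul_eq_mul, mul_comm]
  rfl

lemma domDegree_strictMono (hk : 1 ≤ k) (hmk : ∀ i, 2 ≤ m i + k) :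
    StrictMono (domDegree m k) := by
  intro j j' hjj'
  have hsum : ∑ l ∈ Iic j, m l + m j' ≤ ∑ l ∈ Iic j', m l := by
    rw [add_comm, ← sum_insert (by simpa using hjj')]
    exact sum_le_sum_of_subset (insert_subset (mem_Iic.2 le_rfl) (Iic_subset_Iic.2 hjj'.le))
  obtain ⟨e, he⟩ : ∃ e, (j' : ℕ) = j + e + 1 :=
    ⟨j' - j - 1, by have : (j : ℕ) < j' := hjj'; omega⟩
  have hke : e ≤ k * e := Nat.le_mul_of_pos_left e hk
  have hkj' : k * j' = k * j + k * e + k := by rw [he]; ring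
  have := hmk j'
  have := j'.isLt
  unfold domDegree
  omega

lemma le_domDegree (hd : 0 < d) (hm : 1 ≤ m ⟨0, hd⟩) (hk : 1 ≤ k) (j : Fin d) :
    d ≤ domDegree m k j := by
  have hm0 : m ⟨0, hd⟩ ≤ ∑ l ∈ Iic j, m l :=
    single_le_sum (fun _ _ => Nat.zero_le _) (mem_Iic.2 (Fin.mk_le_of_le_val (Nat.zero_le _)))
  have hkj : (j : ℕ) ≤ k * j := Nat.le_mul_of_pos_left _ hk
  have := j.isLt
  unfold domDegree
  omega

lemma le_card_filter_le_image_vertexDegree (hd : 0 < d) (hm : 1 ≤ m ⟨0, hd⟩) (hk : 1 ≤ k)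
    (hmk : ∀ i, 2 ≤ m i + k) :
    d ≤ #{x ∈ univ.image (vertexDegree (thrEdges d m fun _ => k)) | d ≤ x} :=
  calc d = #(univ.image (domDegree m k)) := by
        rw [card_image_of_injective _ (domDegree_strictMono hk hmk).injective, card_univ,
          Fintype.card_fin]
    _ ≤ _ := card_le_card fun x hx => by
        obtain ⟨j, -, rfl⟩ := mem_image.1 hx
        refine mem_filter.2 ⟨mem_image.2 ⟨Sum.inr ⟨j, ⟨0, hk⟩⟩, mem_univ _, ?_⟩,
          le_domDegree hd hm hk j⟩
        exact vertexDegree_inr_eq_domDegree hk j _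

lemma card_filter_lt_image_vertexDegree_le (hk : 0 < k) :
    #{x ∈ univ.image (vertexDegree (thrEdges d m fun _ => k)) | d < x} ≤ d :=
  calc _ ≤ #(univ.image (domDegree m k)) := card_le_card fun x hx => by
        obtain ⟨hx, hdx⟩ := mem_filter.1 hx
        obtain ⟨v, -, rfl⟩ := mem_image.1 hx
        rcases v with ⟨j, a⟩ | ⟨j, b⟩
        · exact absurd (vertexDegree_inl_le (fun _ => hk) j a) hdx.not_ge
        · exact mem_image.2 ⟨j, mem_univ _, (vertexDegree_inr_eq_domDegree hk j b).symm⟩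
    _ ≤ d := card_image_le.trans (by simp)

end ConstantDomination

/-- The number of dominations `d` of a `k`-threshold hypergraph is recovered from the
distinct degrees `D` (sorted decreasingly, `1`-indexed): `d = min{s : D_s < s} - 1`,
that is, `D_d ≥ d` and `D_{d+1} < d + 1`. -/
theorem stmt_18 (d : ℕ) (hd : 0 < d) (m : Fin d → ℕ) (k : ℕ)
    (hm : 1 ≤ m ⟨0, hd⟩) (hk : 1 ≤ k) (hmk : ∀ i : Fin d, 2 ≤ m i + k) :
    let deg : TV d m (fun _ => k) → ℕ :=
      fun v => ((thrEdges d m fun _ => k).filter (fun e => v ∈ e)).card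
    let D : ℕ → ℕ :=
      fun i => (((Finset.univ.image deg).sort (· ≤ ·)).reverse).getD (i - 1) 0
    ∀ hex : ∃ s, D s < s,
      Nat.find hex = d + 1 ∧ d ≤ D d ∧ D (d + 1) < d + 1 :=
  find_getD_sort_reverse_lt_eq _ d (le_card_filter_le_image_vertexDegree hd hm hk hmk)
    (card_filter_lt_image_vertexDegree_le hk)
end
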